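/- arXiv:1901.05698 — 8 statements merged into one kernel-verified Lean document; each statement's English description precedes it below -/
import Mathlib

section
/- For every probability measure ν on [0,∞) with cumulative distribution function F and every t > 0, the Williamson transform satisfies G(t) = F(t) − t^{−α} H(t) = α t^{−α} ∫_0^t x^{α−1} F(x) dx. -/
/-!
On `[0, ∞)` the integrand `(1 - (x/t)^α)₊` equals `1 - t^(-α) x^α` on `[0, t]` and vanishes
beyond `t`, which gives `G(t) = F(t) - t^(-α) H(t)`. The layer-cake formula for `x ↦ x^α` under
`ν` restricted to `[0, t]` gives `H(t) = α ∫₀ᵗ s^(α-1) ν((s, t]) ds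
= t^α F(t) - α ∫₀ᵗ s^(α-1) F(s) ds`, and substituting this yields the second identity.
-/

open MeasureTheory Real Set

section

variable {ν : Measure ℝ} {α t : ℝ}

lemma max_one_sub_div_rpow_zero_eq_indicator (hα : 0 ≤ α) (ht : 0 < t) {x : ℝ} (hx : 0 ≤ x) :
    max (1 - (x / t) ^ α) 0 = (Icc 0 t).indicator (fun y ↦ 1 - t ^ (-α) * y ^ α) x := by
  have hdiv : (x / t) ^ α = t ^ (-α) * x ^ α := by
    rw [div_rpow hx ht.le, rpow_neg ht.le, inv_mul_eq_div]
  rcases le_or_gt x t with hxt | htx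
  · rw [indicator_of_mem (mem_Icc.2 ⟨hx, hxt⟩), ← hdiv, max_eq_left]
    exact sub_nonneg.2 (rpow_le_one (div_nonneg hx ht.le) ((div_le_one ht).2 hxt) hα)
  · rw [indicator_of_notMem fun h ↦ h.2.not_gt htx, max_eq_right]
    exact sub_nonpos.2 (one_le_rpow ((one_le_div ht).2 htx.le) hα)

lemma measureReal_Icc_zero_eq_measureReal_Iic (hν : ν (Iio 0) = 0) (t : ℝ) :
    ν.real (Icc 0 t) = ν.real (Iic t) := by
  rw [← Iic_sdiff_Iio, measureReal_def, measure_sdiff_null hν, measureReal_def]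

lemma integral_max_one_sub_div_rpow_zero [IsFiniteMeasure ν] (hν : ν (Iio 0) = 0) (hα : 0 ≤ α)
    (ht : 0 < t) :
    ∫ x, max (1 - (x / t) ^ α) 0 ∂ν = ν.real (Iic t) - t ^ (-α) * ∫ x in Icc 0 t, x ^ α ∂ν := by
  have hnonneg : ∀ᵐ x ∂ν, 0 ≤ x :=
    measure_mono_null (fun x (hx : ¬0 ≤ x) ↦ (not_le.1 hx : x < 0)) hν
  have hint : IntegrableOn (fun x : ℝ ↦ x ^ α) (Icc 0 t) ν :=
    (continuous_rpow_const hα).continuousOn.integrableOn_compact isCompact_Icc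
  rw [integral_congr_ae (hnonneg.mono fun x hx ↦ max_one_sub_div_rpow_zero_eq_indicator hα ht hx),
    integral_indicator measurableSet_Icc, integral_sub (integrable_const _) (hint.const_mul _),
    setIntegral_const, integral_const_mul, smul_eq_mul, mul_one,
    measureReal_Icc_zero_eq_measureReal_Iic hν]

lemma measureReal_Ioc_eq_sub [IsFiniteMeasure ν] {s t : ℝ} (hst : s ≤ t) :
    ν.real (Ioc s t) = ν.real (Iic t) - ν.real (Iic s) := by
  rw [← Iic_sdiff_Iic, measureReal_sdiff (Iic_subset_Iic.2 hst) measurableSet_Iic]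

lemma setIntegral_Icc_rpow_eq_mul_integral_measureReal_Ioc [IsFiniteMeasure ν] (hα : 0 < α) :
    ∫ x in Icc 0 t, x ^ α ∂ν = α * ∫ s in Ioc 0 t, s ^ (α - 1) * ν.real (Ioc s t) := by
  have hnonneg : 0 ≤ᵐ[ν.restrict (Icc 0 t)] id :=
    ae_restrict_of_forall_mem measurableSet_Icc fun x hx ↦ hx.1
  have tail (s : ℝ) (hs : 0 ≤ s) : ν.restrict (Icc 0 t) {x | s < id x} = ν (Ioc s t) := by
    rw [show {x : ℝ | s < id x} = Ioi s from rfl, Measure.restrict_apply measurableSet_Ioi]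
    congr 1
    ext x
    simp only [mem_inter_iff, mem_Ioi, mem_Icc, mem_Ioc]
    exact ⟨fun h ↦ ⟨h.1, h.2.2⟩, fun h ↦ ⟨h.1, hs.trans h.1.le, h.2⟩⟩
  have key := lintegral_rpow_eq_lintegral_meas_lt_mul _ hnonneg aemeasurable_id hα
  have hrhs : ∫⁻ s in Ioi 0, ν.restrict (Icc 0 t) {x | s < id x} * ENNReal.ofReal (s ^ (α - 1))
      = ∫⁻ s in Ioc 0 t, ENNReal.ofReal (s ^ (α - 1) * ν.real (Ioc s t)) := by
    rw [← inter_eq_left.2 (Ioc_subset_Ioi_self : Ioc 0 t ⊆ Ioi 0),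
      ← setLIntegral_indicator measurableSet_Ioc]
    refine setLIntegral_congr_fun measurableSet_Ioi fun s hs ↦ ?_
    rw [tail s (le_of_lt hs)]
    rcases le_or_gt s t with hst | hts
    · rw [indicator_of_mem (mem_Ioc.2 ⟨hs, hst⟩),
        ENNReal.ofReal_mul (rpow_nonneg (le_of_lt hs) _), ofReal_measureReal, mul_comm]
    · rw [indicator_of_notMem fun h ↦ h.2.not_gt hts, Ioc_eq_empty (not_lt.2 hts.le),
        measure_empty, zero_mul]
  have hmeas : AEStronglyMeasurable (fun s ↦ s ^ (α - 1) * ν.real (Ioc s t))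
      (volume.restrict (Ioc 0 t)) := by
    have hanti : Antitone fun s ↦ ν.real (Ioc s t) :=
      fun a b hab ↦ measureReal_mono (Ioc_subset_Ioc_left hab)
    exact ((measurable_id.pow_const _).mul hanti.measurable).aestronglyMeasurable
  have hnonneg' : 0 ≤ᵐ[volume.restrict (Ioc 0 t)] fun s ↦ s ^ (α - 1) * ν.real (Ioc s t) :=
    ae_restrict_of_forall_mem measurableSet_Ioc fun s hs ↦
      mul_nonneg (rpow_nonneg hs.1.le _) measureReal_nonneg
  rw [integral_eq_lintegral_of_nonneg_ae (f := fun x ↦ x ^ α)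
      (hnonneg.mono fun x hx ↦ rpow_nonneg hx α)
      (continuous_rpow_const hα.le).aestronglyMeasurable,
    integral_eq_lintegral_of_nonneg_ae hnonneg' hmeas, ← hrhs]
  simpa [ENNReal.toReal_mul, hα.le] using congrArg ENNReal.toReal key

lemma integral_Ioc_rpow_sub_one (hα : 0 < α) (ht : 0 ≤ t) :
    ∫ s in Ioc 0 t, s ^ (α - 1) = t ^ α / α := by
  rw [← intervalIntegral.integral_of_le ht, integral_rpow (Or.inl (by linarith)),
    sub_add_cancel, zero_rpow hα.ne', sub_zero]

lemma mul_integral_rpow_mul_measureReal_Iic [IsFiniteMeasure ν] (hα : 0 < α) (ht : 0 ≤ t) :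
    α * ∫ s in Ioc 0 t, s ^ (α - 1) * ν.real (Iic s)
      = t ^ α * ν.real (Iic t) - ∫ x in Icc 0 t, x ^ α ∂ν := by
  have hpow : IntegrableOn (fun s : ℝ ↦ s ^ (α - 1)) (Ioc 0 t) :=
    (intervalIntegral.intervalIntegrable_rpow' (by linarith)).1
  have hcdf : IntegrableOn (fun s ↦ s ^ (α - 1) * ν.real (Iic s)) (Ioc 0 t) := by
    have hmono : Monotone fun s ↦ ν.real (Iic s) :=
      fun a b hab ↦ measureReal_mono (Iic_subset_Iic.2 hab)
    refine hpow.mul_bdd hmono.measurable.aestronglyMeasurable (c := ν.real univ)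
      (ae_of_all _ fun s ↦ ?_)
    rw [norm_of_nonneg measureReal_nonneg]
    exact measureReal_mono (subset_univ _)
  have hsplit : ∫ s in Ioc 0 t, s ^ (α - 1) * ν.real (Ioc s t)
      = ν.real (Iic t) * (t ^ α / α) - ∫ s in Ioc 0 t, s ^ (α - 1) * ν.real (Iic s) := by
    rw [← integral_Ioc_rpow_sub_one hα ht, ← integral_const_mul,
      ← integral_sub (hpow.const_mul _) hcdf]
    refine setIntegral_congr_fun measurableSet_Ioc fun s hs ↦ ?_
    rw [measureReal_Ioc_eq_sub hs.2]
    ring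
  rw [setIntegral_Icc_rpow_eq_mul_integral_measureReal_Ioc hα, hsplit]
  field_simp
  ring

end

/-- For every probability measure ν on [0,∞) with cdf F and every t > 0,
the Williamson transform satisfies
G(t) = F(t) − t^{−α} H(t) = α t^{−α} ∫_0^t x^{α−1} F(x) dx. -/
theorem williamson_eq_cdf_sub_truncated_moment
    (α : ℝ) (hα : 0 < α)
    (ν : Measure ℝ) [IsProbabilityMeasure ν] (hν : ν (Set.Iio 0) = 0)
    (F G H : ℝ → ℝ)
    (hF : ∀ t, F t = (ν (Set.Iic t)).toReal)
    (hG : ∀ t, 0 < t → G t = ∫ x, max (1 - (x / t) ^ α) 0 ∂ν)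
    (hH : ∀ t, 0 < t → H t = ∫ x in Set.Icc 0 t, x ^ α ∂ν)
    (t : ℝ) (ht : 0 < t) :
    G t = F t - t ^ (-α) * H t ∧
    G t = α * t ^ (-α) * ∫ x in Set.Ioc 0 t, x ^ (α - 1) * F x := by
  have hGt : G t = F t - t ^ (-α) * H t := by
    rw [hG t ht, hH t ht, hF t, integral_max_one_sub_div_rpow_zero hν hα.le ht, measureReal_def]
  refine ⟨hGt, ?_⟩
  have hcdf := mul_integral_rpow_mul_measureReal_Iic (ν := ν) hα ht.le
  simp only [measureReal_def, ← hF, ← hH t ht] at hcdf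
  rw [hGt, mul_comm α, mul_assoc, hcdf, mul_sub, ← mul_assoc, ← rpow_add ht, neg_add_cancel,
    rpow_zero, one_mul]
end

section
/- Let ν be a probability measure on [0,∞) with cumulative distribution function F and Williamson transform G. If t > 0 and F is continuous at t, then G is differentiable at t and F(t) = G(t) + (t/α) G′(t). -/
/-!
With `k s x = (1 - (x / s) ^ α)₊` we have `G s = ∫ k s x dν(x)`, and we differentiate under
the integral sign. For `x > 0`, `s ↦ k s x` is `1 - exp (-α (log s - log x)₊)`, a composition
of an `α`-Lipschitz map with `log`, so it is `α / r`-Lipschitz on `[r, ∞)` uniformly in `x`;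
for `x ≠ t` it is differentiable at `t` with derivative `(α / t) (x / t) ^ α 1_{x < t}`.
Continuity of `F` at `t` means `ν {t} = 0`, so `G' t` is the integral of this derivative, and
the pointwise identity `k t x + (t / α) (α / t) (x / t) ^ α 1_{x < t} = 1_{x < t}` integrates to
`G t + (t / α) G' t = ν (Iio t) = F t`.
-/

open MeasureTheory Filter Real Topology ProbabilityTheory Set

lemma exp_sub_exp_le_exp_mul_sub (u v : ℝ) : exp u - exp v ≤ exp u * (u - v) := by
  have := mul_le_mul_of_nonneg_left (add_one_le_exp (v - u)) (exp_pos u).le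
  rw [← exp_add, add_sub_cancel] at this
  linarith

lemma lipschitzWith_one_sub_exp_neg_mul_max {α : ℝ} (hα : 0 ≤ α) (c : ℝ) :
    LipschitzWith (Real.toNNReal α) fun y => 1 - exp (-(α * max (y - c) 0)) := by
  refine LipschitzWith.of_le_add_mul' α fun y z => ?_
  set Y := max (y - c) 0
  set Z := max (z - c) 0
  have hYZ : |Y - Z| ≤ dist y z := by
    rw [Real.dist_eq, ← sub_sub_sub_cancel_right y z c]
    exact abs_max_sub_max_le_abs _ _ _
  have hexp : exp (-(α * Z)) ≤ 1 :=
    exp_le_one_iff.2 (neg_nonpos.2 (mul_nonneg hα (le_max_right _ _)))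
  suffices exp (-(α * Z)) - exp (-(α * Y)) ≤ α * dist y z by linarith
  calc exp (-(α * Z)) - exp (-(α * Y)) ≤ exp (-(α * Z)) * (α * (Y - Z)) := by
        convert exp_sub_exp_le_exp_mul_sub (-(α * Z)) (-(α * Y)) using 2; ring
    _ ≤ |α * (Y - Z)| := by
        refine (le_abs_self _).trans ?_
        rw [abs_mul, abs_of_pos (exp_pos _)]
        exact mul_le_of_le_one_left (abs_nonneg _) hexp
    _ ≤ α * dist y z := by rw [abs_mul, abs_of_nonneg hα]; gcongr

lemma lipschitzOnWith_log_Ici {r : ℝ} (hr : 0 < r) :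
    LipschitzOnWith (Real.toNNReal r⁻¹) log (Ici r) := by
  refine LipschitzOnWith.of_le_add_mul' r⁻¹ fun x hx y hy => ?_
  have hx0 : 0 < x := hr.trans_le hx
  have hy0 : 0 < y := hr.trans_le hy
  calc log x = log y + log (x / y) := by rw [log_div hx0.ne' hy0.ne']; ring
    _ ≤ log y + (x / y - 1) := by gcongr; exact log_le_sub_one_of_pos (div_pos hx0 hy0)
    _ = log y + (x - y) / y := by field_simp
    _ ≤ log y + r⁻¹ * dist x y := by
        gcongr
        rw [div_eq_inv_mul, Real.dist_eq]
        calc y⁻¹ * (x - y) ≤ y⁻¹ * |x - y| := by gcongr; exact le_abs_self _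
          _ ≤ r⁻¹ * |x - y| := by gcongr; exact hy

lemma measure_singleton_eq_zero_of_continuousAt_cdf (μ : Measure ℝ) [IsProbabilityMeasure μ]
    {t : ℝ} (h : ContinuousAt (cdf μ) t) : μ {t} = 0 := by
  rw [← measure_cdf μ, StieltjesFunction.measure_singleton,
    (cdf μ).mono.continuousWithinAt_Iio_iff_leftLim_eq.1 h.continuousWithinAt, sub_self,
    ENNReal.ofReal_zero]

noncomputable def williamsonKernel (α s x : ℝ) : ℝ := max (1 - (x / s) ^ α) 0

noncomputable def williamsonKernelDeriv (α t x : ℝ) : ℝ :=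
  if x < t then α / t * (x / t) ^ α else 0

section Kernel

variable {α s t x : ℝ}

lemma williamsonKernel_of_le (hα : 0 ≤ α) (hx : 0 ≤ x) (hxs : x ≤ s) :
    williamsonKernel α s x = 1 - (x / s) ^ α := by
  have hxs' : x / s ≤ 1 := div_le_one_of_le₀ hxs (hx.trans hxs)
  have : (x / s) ^ α ≤ 1 := rpow_le_one (div_nonneg hx (hx.trans hxs)) hxs' hα
  exact max_eq_left (by linarith)

lemma williamsonKernel_of_ge (hα : 0 ≤ α) (hs : 0 < s) (hsx : s ≤ x) :
    williamsonKernel α s x = 0 := by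
  have : 1 ≤ (x / s) ^ α := one_le_rpow ((one_le_div hs).2 hsx) hα
  exact max_eq_right (by linarith)

lemma williamsonKernel_eq_one_sub_exp (hα : 0 ≤ α) (hx : 0 < x) (hs : 0 < s) :
    williamsonKernel α s x = 1 - exp (-(α * max (log s - log x) 0)) := by
  rcases le_total x s with hxs | hsx
  · rw [williamsonKernel_of_le hα hx.le hxs, max_eq_left (sub_nonneg.2 (log_le_log hx hxs)),
      rpow_def_of_pos (div_pos hx hs), log_div hx.ne' hs.ne']
    ring_nf
  · rw [williamsonKernel_of_ge hα hs hsx, max_eq_right (sub_nonpos.2 (log_le_log hs hsx))]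
    simp

lemma lipschitzOnWith_williamsonKernel {r : ℝ} (hα : 0 ≤ α) (hr : 0 < r) (hx : 0 ≤ x) :
    LipschitzOnWith (Real.toNNReal (α / r)) (williamsonKernel α · x) (Ici r) := by
  rcases hx.eq_or_lt with rfl | hx
  · simp only [williamsonKernel, zero_div]
    exact LipschitzWith.const' _ |>.lipschitzOnWith
  have hlip := (lipschitzWith_one_sub_exp_neg_mul_max hα (log x)).comp_lipschitzOnWith
    (lipschitzOnWith_log_Ici hr)
  rw [← Real.toNNReal_mul hα, ← div_eq_mul_inv] at hlip
  intro a ha b hb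
  simp only [williamsonKernel_eq_one_sub_exp hα hx (hr.trans_le ha),
    williamsonKernel_eq_one_sub_exp hα hx (hr.trans_le hb)]
  exact hlip ha hb

lemma hasDerivAt_williamsonKernel (hα : 0 < α) (ht : 0 < t) (hx : 0 ≤ x) (hxt : x ≠ t) :
    HasDerivAt (williamsonKernel α · x) (williamsonKernelDeriv α t x) t := by
  rcases hxt.lt_or_gt with hlt | hgt
  · have hd : HasDerivAt (fun s => 1 - x ^ α * s ^ (-α)) (α / t * (x / t) ^ α) t := by
      refine (((hasDerivAt_rpow_const (Or.inl ht.ne')).const_mul (x ^ α)).const_sub 1).congr_deriv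
        ?_
      rw [div_rpow hx ht.le, rpow_sub_one ht.ne', rpow_neg ht.le]
      field_simp
    rw [williamsonKernelDeriv, if_pos hlt]
    refine hd.congr_of_eventuallyEq ?_
    filter_upwards [Ioi_mem_nhds hlt] with s hs
    rw [williamsonKernel_of_le hα.le hx hs.le, div_rpow hx (hx.trans_lt hs).le,
      rpow_neg (hx.trans_lt hs).le, div_eq_mul_inv]
  · rw [williamsonKernelDeriv, if_neg hgt.not_gt]
    refine (hasDerivAt_const t (0 : ℝ)).congr_of_eventuallyEq ?_
    filter_upwards [Ioo_mem_nhds ht hgt] with s hs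
    exact williamsonKernel_of_ge hα.le hs.1 hs.2.le

lemma williamsonKernel_add_mul_deriv (hα : 0 < α) (ht : 0 < t) (hx : 0 ≤ x) :
    williamsonKernel α t x + t / α * williamsonKernelDeriv α t x = (Iio t).indicator 1 x := by
  by_cases hxt : x < t
  · rw [williamsonKernel_of_le hα.le hx hxt.le, williamsonKernelDeriv, if_pos hxt,
      indicator_of_mem (mem_Iio.2 hxt), Pi.one_apply]
    field_simp
    ring
  · rw [williamsonKernel_of_ge hα.le ht (not_lt.1 hxt), williamsonKernelDeriv, if_neg hxt,
      indicator_of_notMem (notMem_Iio.2 (not_lt.1 hxt))]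
    ring

end Kernel

section Integral

variable {α t : ℝ} {ν : Measure ℝ} [IsFiniteMeasure ν]

lemma measurable_williamsonKernel (α s : ℝ) : Measurable (williamsonKernel α s) := by
  unfold williamsonKernel
  fun_prop

lemma integrable_williamsonKernel (hν : ∀ᵐ x ∂ν, 0 ≤ x) {s : ℝ} (hs : 0 < s) :
    Integrable (williamsonKernel α s) ν := by
  refine (integrable_const 1).mono' (measurable_williamsonKernel α s).aestronglyMeasurable ?_
  filter_upwards [hν] with x hx
  have : 0 ≤ (x / s) ^ α := rpow_nonneg (div_nonneg hx hs.le) α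
  rw [williamsonKernel, Real.norm_of_nonneg (le_max_right _ _)]
  exact max_le (by linarith) zero_le_one

lemma hasDerivAt_integral_williamsonKernel (hα : 0 < α) (ht : 0 < t)
    (hν : ∀ᵐ x ∂ν, 0 ≤ x) (hνt : ν {t} = 0) :
    Integrable (williamsonKernelDeriv α t) ν ∧
      HasDerivAt (fun s => ∫ x, williamsonKernel α s x ∂ν)
        (∫ x, williamsonKernelDeriv α t x ∂ν) t := by
  have hνt' : ∀ᵐ x ∂ν, x ≠ t := measure_eq_zero_iff_ae_notMem.1 hνt
  refine hasDerivAt_integral_of_dominated_loc_of_lip (bound := fun _ => α / (t / 2))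
    (Ici_mem_nhds (half_lt_self ht))
    (.of_forall fun s => (measurable_williamsonKernel α s).aestronglyMeasurable)
    (integrable_williamsonKernel hν ht) ?_ ?_ (integrable_const _) ?_
  · exact (Measurable.ite measurableSet_Iio (by fun_prop) measurable_const).aestronglyMeasurable
  · filter_upwards [hν] with x hx
    rw [Real.nnabs_of_nonneg (by positivity)]
    exact lipschitzOnWith_williamsonKernel hα.le (half_pos ht) hx
  · filter_upwards [hν, hνt'] with x hx hxt
    exact hasDerivAt_williamsonKernel hα ht hx hxt

end Integral

/-- If t > 0 and the cdf F is continuous at t, then the Williamson transform G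
is differentiable at t and F(t) = G(t) + (t/α) G′(t). -/
theorem cdf_eq_williamson_add_deriv
    (α : ℝ) (hα : 0 < α)
    (ν : Measure ℝ) [IsProbabilityMeasure ν] (hν : ν (Set.Iio 0) = 0)
    (F G : ℝ → ℝ)
    (hF : ∀ t, F t = (ν (Set.Iic t)).toReal)
    (hG : ∀ t, 0 < t → G t = ∫ x, max (1 - (x / t) ^ α) 0 ∂ν)
    (t : ℝ) (ht : 0 < t) (hcont : ContinuousAt F t) :
    DifferentiableAt ℝ G t ∧ F t = G t + (t / α) * deriv G t := by
  have hν' : ∀ᵐ x ∂ν, 0 ≤ x :=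
    (measure_eq_zero_iff_ae_notMem.1 hν).mono fun x hx => not_lt.1 hx
  have hcdf : ⇑(cdf ν) = F := funext fun s => by rw [cdf_eq_real, hF, measureReal_def]
  have hνt : ν {t} = 0 := measure_singleton_eq_zero_of_continuousAt_cdf ν (hcdf ▸ hcont)
  obtain ⟨hint, hderiv⟩ := hasDerivAt_integral_williamsonKernel hα ht hν' hνt
  have hG' : HasDerivAt G (∫ x, williamsonKernelDeriv α t x ∂ν) t :=
    hderiv.congr_of_eventuallyEq (eventually_gt_nhds ht |>.mono fun s hs => hG s hs)
  refine ⟨hG'.differentiableAt, ?_⟩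
  calc F t = ν.real (Iio t) := by rw [hF, measureReal_def, measure_congr (Iio_ae_eq_Iic' hνt)]
    _ = ∫ x, (Iio t).indicator 1 x ∂ν := (integral_indicator_one measurableSet_Iio).symm
    _ = ∫ x, williamsonKernel α t x + t / α * williamsonKernelDeriv α t x ∂ν :=
        integral_congr_ae (hν'.mono fun x hx => (williamsonKernel_add_mul_deriv hα ht hx).symm)
    _ = G t + t / α * deriv G t := by
        rw [integral_add (integrable_williamsonKernel hν' ht) (hint.const_mul _),
          integral_const_mul, hG t ht, hG'.deriv]
        rfl
end

section
/- Let ν be a probability measure on [0,∞) with Williamson transform G and truncated α-moment H, let n ≥ 1 be an integer, and let μ be a probability measure on [0,∞) with cumulative distribution function F_μ whose Williamson transform equals G^n, i.e. ∫_{[0,∞)} (1 − (x/t)^α)₊ μ(dx) = G(t)^n for all t > 0. Then for every t > 0, F_μ(t) = G(t)^{n−1} ( n t^{−α} H(t) + G(t) ). -/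
/-!
For a finite measure `ρ` on `[0, ∞)` with distribution function `F` and Williamson transform `W`,
Fubini gives `t ^ α * W t = ∫ x, (t ^ α - x ^ α)₊ ∂ρ = ∫ s in 0..t, α * s ^ (α - 1) * F s`.
Since `F` is right-continuous, `W` has right derivative `α / t * (F t - W t)` at every
`t > 0`. Differentiating `W_μ = W_ν ^ n = G ^ n` from the right therefore gives
`F_μ - G ^ n = n * G ^ (n - 1) * (F_ν - G)`, and `F_ν - G = t ^ (-α) * H` because the integral of
`(t ^ α - x ^ α)₊` is also `t ^ α * F t - H t`.
-/

open MeasureTheory Real Set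

noncomputable def williamsonTransform (α : ℝ) (ρ : Measure ℝ) (t : ℝ) : ℝ :=
  ∫ x, max (1 - (x / t) ^ α) 0 ∂ρ

section

variable {α t : ℝ} {ρ : Measure ℝ}

theorem rpow_mul_williamsonTransform (hρ : ∀ᵐ x ∂ρ, 0 ≤ x) (ht : 0 < t) :
    t ^ α * williamsonTransform α ρ t = ∫ x, max (t ^ α - x ^ α) 0 ∂ρ := by
  rw [williamsonTransform, ← integral_const_mul]
  refine integral_congr_ae ?_
  filter_upwards [hρ] with x hx
  have htα : 0 < t ^ α := rpow_pos_of_pos ht α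
  rw [mul_max_of_nonneg _ _ htα.le, div_rpow hx ht.le, mul_zero, mul_sub, mul_one,
    mul_div_cancel₀ _ htα.ne']

theorem integral_max_rpow_sub [IsFiniteMeasure ρ] (hα : 0 < α) (hρ : ∀ᵐ x ∂ρ, 0 ≤ x)
    (ht : 0 < t) :
    ∫ x, max (t ^ α - x ^ α) 0 ∂ρ = t ^ α * ρ.real (Iic t) - ∫ x in Icc 0 t, x ^ α ∂ρ := by
  have hIcc : (Icc 0 t : Set ℝ) =ᵐ[ρ] Iic t := by
    filter_upwards [hρ] with x hx
    change (x ∈ Icc 0 t) = (x ∈ Iic t)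
    simp [hx]
  have hind : (fun x => max (t ^ α - x ^ α) 0)
      =ᵐ[ρ] (Icc 0 t).indicator (fun x => t ^ α - x ^ α) := by
    filter_upwards [hρ] with x hx
    by_cases hxt : x ≤ t
    · have : x ^ α ≤ t ^ α := rpow_le_rpow hx hxt hα.le
      simp [indicator_of_mem (show x ∈ Icc 0 t from ⟨hx, hxt⟩), this]
    · have : t ^ α ≤ x ^ α := rpow_le_rpow ht.le (not_le.1 hxt).le hα.le
      simp [indicator_of_notMem (show x ∉ Icc 0 t from fun h => hxt h.2), this]
  have hint : IntegrableOn (fun x : ℝ => x ^ α) (Icc 0 t) ρ :=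
    (continuousOn_id.rpow_const fun _ _ => Or.inr hα.le).integrableOn_compact isCompact_Icc
  rw [integral_congr_ae hind, integral_indicator measurableSet_Icc,
    integral_sub (integrableOn_const (measure_ne_top _ _) (C := t ^ α)) hint, setIntegral_const,
    measureReal_congr hIcc, smul_eq_mul, mul_comm]

theorem williamsonTransform_eq_measureReal_Iic_sub [IsFiniteMeasure ρ] (hα : 0 < α)
    (hρ : ∀ᵐ x ∂ρ, 0 ≤ x) (ht : 0 < t) :
    williamsonTransform α ρ t = ρ.real (Iic t) - t ^ (-α) * ∫ x in Icc 0 t, x ^ α ∂ρ := by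
  have h := rpow_mul_williamsonTransform (α := α) hρ ht
  rw [integral_max_rpow_sub hα hρ ht] at h
  rw [rpow_neg ht.le]
  field_simp
  linarith

theorem integrableOn_mul_rpow_sub_one (hα : 0 < α) (ht : 0 ≤ t) :
    IntegrableOn (fun s : ℝ => α * s ^ (α - 1)) (Ioc 0 t) :=
  (intervalIntegrable_iff_integrableOn_Ioc_of_le ht).1 <|
    (intervalIntegral.intervalIntegrable_rpow' (by linarith)).const_mul α

theorem setIntegral_Ioc_indicator_mul_rpow_sub_one (hα : 0 < α) (ht : 0 ≤ t) {x : ℝ}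
    (hx : 0 ≤ x) :
    ∫ s in Ioc 0 t, (Ici x).indicator (fun s => α * s ^ (α - 1)) s = max (t ^ α - x ^ α) 0 := by
  have hIoc : (Ioc 0 t ∩ Ici x : Set ℝ) =ᵐ[volume] Ioc x t := by
    simpa [Ioc_inter_Ioi, hx] using
      (ae_eq_refl (Ioc 0 t)).inter (Ioi_ae_eq_Ici (μ := volume) (a := x)).symm
  rw [setIntegral_indicator measurableSet_Ici, setIntegral_congr_set hIoc]
  rcases le_or_gt x t with hxt | htx
  · rw [← intervalIntegral.integral_of_le hxt, intervalIntegral.integral_const_mul,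
      integral_rpow (Or.inl (by linarith)), sub_add_cancel,
      max_eq_left (sub_nonneg.2 (rpow_le_rpow hx hxt hα.le))]
    field_simp
  · rw [Ioc_eq_empty (not_lt.2 htx.le), Measure.restrict_empty, integral_zero_measure,
      max_eq_right (sub_nonpos.2 (rpow_le_rpow ht htx.le hα.le))]

theorem integral_mul_rpow_sub_one_mul_measureReal_Iic [IsFiniteMeasure ρ] (hα : 0 < α)
    (hρ : ∀ᵐ x ∂ρ, 0 ≤ x) (ht : 0 ≤ t) :
    ∫ s in 0..t, α * s ^ (α - 1) * ρ.real (Iic s) = ∫ x, max (t ^ α - x ^ α) 0 ∂ρ := by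
  set k : ℝ → ℝ → ℝ := fun s x => (Ici x).indicator (fun s => α * s ^ (α - 1)) s
  have hk : Integrable (Function.uncurry k) ((volume.restrict (Ioc 0 t)).prod ρ) := by
    have : Function.uncurry k =
        {p : ℝ × ℝ | p.2 ≤ p.1}.indicator (fun p => α * p.1 ^ (α - 1) * 1) := by
      ext ⟨s, x⟩
      simp [k, indicator_apply]
    rw [this]
    exact ((integrableOn_mul_rpow_sub_one hα ht).mul_prod (integrable_const 1)).indicator
      (measurableSet_le measurable_snd measurable_fst)
  calc ∫ s in 0..t, α * s ^ (α - 1) * ρ.real (Iic s)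
      = ∫ s in Ioc 0 t, (∫ x, k s x ∂ρ) := by
        rw [intervalIntegral.integral_of_le ht]
        congr 1 with s
        have : ∀ x, k s x = (Iic s).indicator (fun _ => α * s ^ (α - 1)) x := fun x => by
          simp [k, indicator_apply]
        simp_rw [this, integral_indicator_const _ measurableSet_Iic, smul_eq_mul, mul_comm]
    _ = ∫ x, (∫ s in Ioc 0 t, k s x) ∂ρ := integral_integral_swap hk
    _ = ∫ x, max (t ^ α - x ^ α) 0 ∂ρ := integral_congr_ae <| by
        filter_upwards [hρ] with x hx
        exact setIntegral_Ioc_indicator_mul_rpow_sub_one hα ht hx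

theorem hasDerivWithinAt_integral_mul_rpow_sub_one_mul_measureReal_Iic
    [IsProbabilityMeasure ρ] (hα : 0 < α) (ht : 0 < t) :
    HasDerivWithinAt (fun u => ∫ s in 0..u, α * s ^ (α - 1) * ρ.real (Iic s))
      (α * t ^ (α - 1) * ρ.real (Iic t)) (Ici t) t := by
  have hF : Measurable fun s => ρ.real (Iic s) :=
    Monotone.measurable fun a b hab => measureReal_mono (Iic_subset_Iic.2 hab)
  have hmeas : Measurable fun s : ℝ => α * s ^ (α - 1) * ρ.real (Iic s) := by fun_prop
  have hint : IntervalIntegrable (fun s => α * s ^ (α - 1) * ρ.real (Iic s)) volume 0 t :=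
    (intervalIntegrable_iff_integrableOn_Ioc_of_le ht.le).2 <|
      (integrableOn_mul_rpow_sub_one hα ht.le).mul_bdd hF.aestronglyMeasurable
        (ae_of_all _ fun s => by
          rw [norm_eq_abs, abs_of_nonneg measureReal_nonneg]; exact measureReal_le_one)
  have hcont : ContinuousWithinAt (fun s => α * s ^ (α - 1) * ρ.real (Iic s)) (Ioi t) t := by
    have hF : ContinuousWithinAt (fun s => ρ.real (Iic s)) (Ici t) t := by
      simpa only [← funext (ProbabilityTheory.cdf_eq_real ρ)] using
        (ProbabilityTheory.cdf ρ).right_continuous t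
    exact ((continuousAt_rpow_const t (α - 1) (Or.inl ht.ne')).const_mul α).continuousWithinAt.mul
      (hF.mono Ioi_subset_Ici_self)
  exact intervalIntegral.integral_hasDerivWithinAt_right hint
    hmeas.stronglyMeasurable.stronglyMeasurableAtFilter hcont

theorem hasDerivWithinAt_williamsonTransform [IsProbabilityMeasure ρ] (hα : 0 < α)
    (hρ : ∀ᵐ x ∂ρ, 0 ≤ x) (ht : 0 < t) :
    HasDerivWithinAt (williamsonTransform α ρ)
      (α / t * (ρ.real (Iic t) - williamsonTransform α ρ t)) (Ici t) t := by
  have hW : ∀ u, 0 < u → williamsonTransform α ρ u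
      = u ^ (-α) * ∫ s in 0..u, α * s ^ (α - 1) * ρ.real (Iic s) := fun u hu => by
    rw [integral_mul_rpow_sub_one_mul_measureReal_Iic hα hρ hu.le,
      ← rpow_mul_williamsonTransform hρ hu, rpow_neg hu.le,
      inv_mul_cancel_left₀ (rpow_pos_of_pos hu α).ne']
  have hD := (hasDerivAt_rpow_const (p := -α) (Or.inl ht.ne')).hasDerivWithinAt.mul
    (hasDerivWithinAt_integral_mul_rpow_sub_one_mul_measureReal_Iic (ρ := ρ) hα ht)
  refine (hD.congr (fun u hu => hW u (ht.trans_le hu)) (hW t ht)).congr_deriv ?_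
  rw [hW t ht, rpow_sub_one ht.ne', rpow_sub_one ht.ne', rpow_neg ht.le]
  field_simp
  ring

end

/-- If μ is a probability measure on [0,∞) whose Williamson transform equals
G^n (the n-fold Kendall convolution power ν^{▵_α n}), then its cdf satisfies
F_μ(t) = G(t)^{n−1} ( n t^{−α} H(t) + G(t) ) for every t > 0. -/
theorem cdf_of_kendall_power
    (α : ℝ) (hα : 0 < α)
    (ν : Measure ℝ) [IsProbabilityMeasure ν] (hν : ν (Set.Iio 0) = 0)
    (G H : ℝ → ℝ)
    (hG : ∀ t, 0 < t → G t = ∫ x, max (1 - (x / t) ^ α) 0 ∂ν)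
    (hH : ∀ t, 0 < t → H t = ∫ x in Set.Icc 0 t, x ^ α ∂ν)
    (n : ℕ) (hn : 1 ≤ n)
    (μ : Measure ℝ) [IsProbabilityMeasure μ] (hμ : μ (Set.Iio 0) = 0)
    (Fμ : ℝ → ℝ) (hFμ : ∀ t, Fμ t = (μ (Set.Iic t)).toReal)
    (hW : ∀ t, 0 < t → ∫ x, max (1 - (x / t) ^ α) 0 ∂μ = (G t) ^ n)
    (t : ℝ) (ht : 0 < t) :
    Fμ t = (G t) ^ (n - 1) * ((n : ℝ) * t ^ (-α) * H t + G t) := by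
  obtain ⟨m, rfl⟩ : ∃ m, n = m + 1 := ⟨n - 1, by omega⟩
  have hν₀ : ∀ᵐ x ∂ν, 0 ≤ x := (measure_eq_zero_iff_ae_notMem.1 hν).mono fun _ h => not_lt.1 h
  have hμ₀ : ∀ᵐ x ∂μ, 0 ≤ x := (measure_eq_zero_iff_ae_notMem.1 hμ).mono fun _ h => not_lt.1 h
  have hWμ : ∀ u, 0 < u → williamsonTransform α μ u = williamsonTransform α ν u ^ (m + 1) :=
    fun u hu => by rw [williamsonTransform, hW u hu, hG u hu, williamsonTransform]
  have hDpow := ((hasDerivWithinAt_williamsonTransform hα hν₀ ht).pow (m + 1)).congr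
    (fun u hu => hWμ u (ht.trans_le hu)) (hWμ t ht)
  have hderiv := (uniqueDiffOn_Ici t t self_mem_Ici).eq_deriv _
    (hasDerivWithinAt_williamsonTransform hα hμ₀ ht) hDpow
  have hFν : ν.real (Iic t) - williamsonTransform α ν t = t ^ (-α) * H t := by
    rw [williamsonTransform_eq_measureReal_Iic_sub hα hν₀ ht, hH t ht]
    ring
  rw [hWμ t ht, hFν, show williamsonTransform α ν t = G t from (hG t ht).symm] at hderiv
  rw [hFμ, ← measureReal_def]
  apply mul_left_cancel₀ (div_pos hα ht).ne'
  simp only [Nat.add_sub_cancel, Nat.cast_add, Nat.cast_one] at hderiv ⊢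
  linear_combination hderiv
end

section
/- Let x, y ≥ 0 with M = max(x,y) > 0 and let t > 0. Then ∫_{(0,t]} w^α (δ_x ▵_α δ_y)(dw) = x^α + y^α − 2 x^α y^α t^{−α} if t ≥ M, and this integral equals 0 if t < M. -/
/-!
Scaling by M = max(x,y) turns the integral into one of (Mu)^α over u ∈ (0, t/M] against
ρ·π_{2α} + (1−ρ)·δ_1. This measure lives on [1,∞), so the integral vanishes when t < M.
Otherwise the atom contributes (1−ρ)M^α and the Pareto part ρM^α·∫_1^{t/M} 2α u^{−α−1} du
= 2ρM^α(1 − (t/M)^{−α}); since ρM^α = m^α and {m, M} = {x, y}, the sum is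
x^α + y^α − 2x^αy^αt^{−α}.
-/

open MeasureTheory Filter Real Topology

/-- The Pareto probability measure on [1,∞) with density 2α u^{−2α−1}. -/
noncomputable def pareto (α : ℝ) : Measure ℝ :=
  (volume.restrict (Set.Ici 1)).withDensity fun u => ENNReal.ofReal (2 * α * u ^ (-2 * α - 1))

/-- The Kendall convolution δ_x ▵_α δ_y of two point masses: the pushforward under
u ↦ M·u of ρ·π_{2α} + (1−ρ)·δ_1, where M = max(x,y), m = min(x,y), ρ = (m/M)^α. -/
noncomputable def kendall (α x y : ℝ) : Measure ℝ :=
  Measure.map (fun u => max x y * u)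
    (ENNReal.ofReal ((min x y / max x y) ^ α) • pareto α +
      ENNReal.ofReal (1 - (min x y / max x y) ^ α) • Measure.dirac 1)

open Set

theorem setIntegral_smul_add_smul_dirac {X E : Type*} [MeasurableSpace X]
    [MeasurableSingletonClass X] [NormedAddCommGroup E] [NormedSpace ℝ E] [CompleteSpace E]
    {μ : Measure X} {f : X → E} {s : Set X} {a : X} {ρ : ℝ} (hρ₀ : 0 ≤ ρ) (hρ₁ : ρ ≤ 1)
    (hf : IntegrableOn f s μ) (ha : a ∈ s) :
    ∫ u in s, f u ∂(ENNReal.ofReal ρ • μ + ENNReal.ofReal (1 - ρ) • Measure.dirac a)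
      = ρ • ∫ u in s, f u ∂μ + (1 - ρ) • f a := by
  have hf_dirac : IntegrableOn f s (Measure.dirac a) := (integrable_dirac (by simp)).restrict
  rw [Measure.restrict_add, Measure.restrict_smul, Measure.restrict_smul,
    integral_add_measure (hf.smul_measure ENNReal.ofReal_ne_top)
      (hf_dirac.smul_measure ENNReal.ofReal_ne_top),
    integral_smul_measure, integral_smul_measure, ENNReal.toReal_ofReal hρ₀,
    ENNReal.toReal_ofReal (sub_nonneg.2 hρ₁)]
  classical
  rw [setIntegral_dirac, if_pos ha]

theorem setIntegral_Ioc_map_const_mul {E : Type*} [NormedAddCommGroup E] [NormedSpace ℝ E]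
    {μ : Measure ℝ} {M : ℝ} (hM : 0 < M) (f : ℝ → E) (t : ℝ) :
    ∫ w in Ioc 0 t, f w ∂(μ.map (M * ·)) = ∫ u in Ioc 0 (t / M), f (M * u) ∂μ := by
  have hemb : MeasurableEmbedding (M * ·) := (Homeomorph.mulLeft₀ M hM.ne').measurableEmbedding
  rw [hemb.setIntegral_map, preimage_const_mul_Ioc₀ _ _ hM, zero_div]

theorem pareto_Iio_one (α : ℝ) : pareto α (Iio 1) = 0 := by
  rw [pareto, withDensity_apply _ measurableSet_Iio, Measure.restrict_restrict measurableSet_Iio,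
    Iio_inter_Ici, Ico_eq_empty_of_le le_rfl, Measure.restrict_empty, lintegral_zero_measure]

theorem pareto_restrict_Ioc (α s : ℝ) :
    (pareto α).restrict (Ioc 0 s) = (volume.restrict (Icc 1 s)).withDensity
      fun u => ENNReal.ofReal (2 * α * u ^ (-2 * α - 1)) := by
  have h_inter : Ioc 0 s ∩ Ici 1 = Icc 1 s := by
    ext u
    simp only [mem_inter_iff, mem_Ioc, mem_Ici, mem_Icc]
    grind
  rw [pareto, restrict_withDensity measurableSet_Ioc, Measure.restrict_restrict measurableSet_Ioc,
    h_inter]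

theorem integrableOn_rpow_pareto (α β s : ℝ) :
    IntegrableOn (fun u => u ^ β) (Ioc 0 s) (pareto α) := by
  rw [IntegrableOn, pareto_restrict_Ioc, integrable_withDensity_iff_integrable_smul' (by fun_prop)
    (ae_of_all _ fun _ => ENNReal.ofReal_lt_top)]
  simp_rw [ENNReal.toReal_ofReal', smul_eq_mul]
  refine ContinuousOn.integrableOn_compact isCompact_Icc ?_
  fun_prop (disch := exact fun u (hu : u ∈ Icc 1 s) => (one_pos.trans_le hu.1).ne')

theorem setIntegral_Ioc_rpow_pareto {α s : ℝ} (hα : 0 < α) (hs : 1 ≤ s) :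
    ∫ u in Ioc 0 s, u ^ α ∂(pareto α) = 2 * (1 - s ^ (-α)) := by
  have h_integrand : ∀ u ∈ Icc 1 s,
      (ENNReal.ofReal (2 * α * u ^ (-2 * α - 1))).toReal • u ^ α = 2 * α * u ^ (-α - 1) := by
    intro u hu
    have hu₀ : 0 < u := one_pos.trans_le hu.1
    rw [ENNReal.toReal_ofReal (by positivity), smul_eq_mul, mul_assoc, ← rpow_add hu₀]
    ring_nf
  have h_exp : -α - 1 ≠ -1 := by linarith
  rw [pareto_restrict_Ioc, integral_withDensity_eq_integral_toReal_smul (by fun_prop)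
      (ae_of_all _ fun _ => ENNReal.ofReal_lt_top),
    setIntegral_congr_fun measurableSet_Icc h_integrand, integral_const_mul,
    integral_Icc_eq_integral_Ioc, ← intervalIntegral.integral_of_le hs,
    integral_rpow (Or.inr ⟨h_exp, notMem_uIcc_of_lt zero_lt_one (zero_lt_one.trans_le hs)⟩),
    sub_add_cancel, one_rpow]
  field_simp
  ring

theorem kendall_Iio_max (α x y : ℝ) (hM : 0 < max x y) : kendall α x y (Iio (max x y)) = 0 := by
  have h_preimage : (max x y * ·) ⁻¹' Iio (max x y) = Iio 1 := by
    ext u; simp [mul_lt_iff_lt_one_right hM]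
  rw [kendall, Measure.map_apply (measurable_const_mul _) measurableSet_Iio, h_preimage]
  simp [pareto_Iio_one]

theorem setIntegral_Ioc_rpow_map_const_mul_pareto_add_dirac {α M ρ t : ℝ} (hα : 0 < α)
    (hM : 0 < M) (hMt : M ≤ t) (hρ₀ : 0 ≤ ρ) (hρ₁ : ρ ≤ 1) :
    ∫ w in Ioc 0 t, w ^ α ∂(Measure.map (M * ·)
        (ENNReal.ofReal ρ • pareto α + ENNReal.ofReal (1 - ρ) • Measure.dirac 1))
      = M ^ α * (1 + ρ - 2 * ρ * (t / M) ^ (-α)) := by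
  have hs : 1 ≤ t / M := (one_le_div hM).2 hMt
  have h_scale : ∀ u ∈ Ioc 0 (t / M), (M * u) ^ α = M ^ α * u ^ α :=
    fun u hu => mul_rpow hM.le hu.1.le
  rw [setIntegral_Ioc_map_const_mul hM, setIntegral_congr_fun measurableSet_Ioc h_scale,
    setIntegral_smul_add_smul_dirac hρ₀ hρ₁ ((integrableOn_rpow_pareto α α _).const_mul _)
      ⟨one_pos, hs⟩,
    integral_const_mul, setIntegral_Ioc_rpow_pareto hα hs, one_rpow, smul_eq_mul, smul_eq_mul]
  ring

theorem kendall_deltas_truncated_moment_general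
    (α x y : ℝ) (hα : 0 < α) (hx : 0 ≤ x) (hy : 0 ≤ y) (hM : 0 < max x y)
    (t : ℝ) :
    (max x y ≤ t →
      ∫ w in Set.Ioc 0 t, w ^ α ∂(kendall α x y)
        = x ^ α + y ^ α - 2 * x ^ α * y ^ α * t ^ (-α)) ∧
    (t < max x y → ∫ w in Set.Ioc 0 t, w ^ α ∂(kendall α x y) = 0) := by
  refine ⟨fun hMt => ?_, fun htM => ?_⟩
  · have hm : 0 ≤ min x y := le_min hx hy
    have hρ₁ : (min x y / max x y) ^ α ≤ 1 :=
      rpow_le_one (by positivity) (div_le_one_of_le₀ min_le_max hM.le) hα.le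
    rw [kendall, setIntegral_Ioc_rpow_map_const_mul_pareto_add_dirac hα hM hMt (by positivity) hρ₁,
      div_rpow hm hM.le, div_rpow (hM.le.trans hMt) hM.le, rpow_neg hM.le]
    have h_sym : (min x y) ^ α + (max x y) ^ α = x ^ α + y ^ α ∧
        (min x y) ^ α * (max x y) ^ α = x ^ α * y ^ α := by
      rcases le_total x y with h | h <;> simp [h, add_comm, mul_comm]
    have hMα : (max x y) ^ α ≠ 0 := (rpow_pos_of_pos hM α).ne'
    field_simp
    linear_combination h_sym.1 - 2 * t ^ (-α) * h_sym.2
  · exact setIntegral_measure_zero _ <|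
      measure_mono_null (fun w hw => hw.2.trans_lt htM) (kendall_Iio_max α x y hM)

/-- ∫_{(0,t]} w^α (δ_x ▵_α δ_y)(dw) = x^α + y^α − 2 x^α y^α t^{−α}
if t ≥ max(x,y) > 0, and the integral is 0 if 0 < t < max(x,y). -/
theorem kendall_deltas_truncated_moment
    (α x y : ℝ) (hα : 0 < α) (hx : 0 ≤ x) (hy : 0 ≤ y) (hM : 0 < max x y)
    (t : ℝ) (ht : 0 < t) :
    (max x y ≤ t →
      ∫ w in Set.Ioc 0 t, w ^ α ∂(kendall α x y)
        = x ^ α + y ^ α - 2 * x ^ α * y ^ α * t ^ (-α)) ∧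
    (t < max x y → ∫ w in Set.Ioc 0 t, w ^ α ∂(kendall α x y) = 0) :=
  kendall_deltas_truncated_moment_general α x y hα hx hy hM t
end

section
/- Let x, y ≥ 0 with max(x,y) > 0. Then for every t > 0, the Williamson transform of δ_x ▵_α δ_y factorizes: ∫_{[0,∞)} (1 − (w/t)^α)₊ (δ_x ▵_α δ_y)(dw) = (1 − (x/t)^α)₊ · (1 − (y/t)^α)₊. -/
/-!
Under `u ↦ M u` the measure `δ_x ▵_α δ_y` is the mixture `ρ π_{2α} + (1 - ρ) δ_1`, so with
`s = (M/t)^α` and `ρ s = (m/t)^α` the left side is `ρ ∫ (1 - s u^α)₊ dπ_{2α} + (1 - ρ) (1 - s)₊`.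
The Pareto integral equals `((1 - s)₊)²`: for `s < 1` the integrand is supported on
`[1, s^{-1/α}]`, where it has the primitive `2 s u^{-α} - u^{-2α}`. Finally
`ρ (1 - s)₊² + (1 - ρ) (1 - s)₊ = (1 - ρ s)₊ (1 - s)₊` since `0 ≤ ρ ≤ 1`.
-/

open MeasureTheory Filter Real Topology

lemma pareto_eq_paretoMeasure (α : ℝ) : pareto α = ProbabilityTheory.paretoMeasure 1 (2 * α) := by
  rw [pareto, ProbabilityTheory.paretoMeasure, ← withDensity_indicator measurableSet_Ici]
  congr with u
  simp only [ProbabilityTheory.paretoPDF_eq, Set.indicator, Set.mem_Ici, one_rpow, mul_one]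
  split_ifs
  · ring_nf
  · simp

lemma isProbabilityMeasure_pareto {α : ℝ} (hα : 0 < α) : IsProbabilityMeasure (pareto α) := by
  rw [pareto_eq_paretoMeasure]
  exact ProbabilityTheory.isProbabilityMeasure_paretoMeasure one_pos (by positivity)

lemma ae_one_le_pareto (α : ℝ) : ∀ᵐ u ∂pareto α, 1 ≤ u :=
  (withDensity_absolutelyContinuous _ _).ae_le (ae_restrict_mem measurableSet_Ici)

lemma integral_pareto {α : ℝ} (hα : 0 ≤ α) (g : ℝ → ℝ) :
    ∫ u, g u ∂pareto α = ∫ u in Set.Ici 1, 2 * α * u ^ (-2 * α - 1) * g u := by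
  rw [pareto, integral_withDensity_eq_integral_toReal_smul (by fun_prop)
    (ae_of_all _ fun _ => ENNReal.ofReal_lt_top)]
  refine setIntegral_congr_fun measurableSet_Ici fun u (hu : 1 ≤ u) => ?_
  have hu0 : 0 ≤ u := zero_le_one.trans hu
  rw [ENNReal.toReal_ofReal (by positivity), smul_eq_mul]

lemma hasDerivAt_pareto_williamson_primitive (α : ℝ) {c u : ℝ} (hc : 0 ≤ c) (hu : 0 < u) :
    HasDerivAt (fun v => 2 * c ^ α * v ^ (-α) - v ^ (-2 * α))
      (2 * α * u ^ (-2 * α - 1) * (1 - (c * u) ^ α)) u := by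
  have h := ((hasDerivAt_rpow_const (p := -α) (Or.inl hu.ne')).const_mul (2 * c ^ α)).sub
    (hasDerivAt_rpow_const (p := -2 * α) (Or.inl hu.ne'))
  refine h.congr_deriv ?_
  have : u ^ (-2 * α - 1) * u ^ α = u ^ (-α - 1) := by rw [← rpow_add hu]; ring_nf
  rw [mul_rpow hc hu.le]
  linear_combination (2 * α * c ^ α) * this

lemma integral_pareto_density_mul_one_sub_rpow (α : ℝ) {c : ℝ} (hc : 0 < c) :
    ∫ u in (1 : ℝ)..c⁻¹, 2 * α * u ^ (-2 * α - 1) * (1 - (c * u) ^ α) = (1 - c ^ α) ^ 2 := by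
  have hpos : ∀ u ∈ Set.uIcc 1 c⁻¹, 0 < u := fun u hu =>
    lt_of_lt_of_le (lt_min one_pos (inv_pos.2 hc)) hu.1
  rw [intervalIntegral.integral_eq_sub_of_hasDerivAt
    (fun u hu => hasDerivAt_pareto_williamson_primitive α hc.le (hpos u hu))]
  · have hinv : c⁻¹ ^ (-α) = c ^ α := by rw [rpow_neg (inv_nonneg.2 hc.le), inv_rpow hc.le, inv_inv]
    have hinv2 : c⁻¹ ^ (-2 * α) = c ^ α * c ^ α := by
      rw [show -2 * α = -α + -α by ring, rpow_add (inv_pos.2 hc), hinv]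
    simp only [hinv, hinv2, one_rpow]
    ring
  · refine ContinuousOn.intervalIntegrable ?_
    intro u hu
    have hu0 := (hpos u hu).ne'
    have hcu := mul_ne_zero hc.ne' hu0
    exact ((continuousAt_const.mul (continuousAt_id.rpow_const (Or.inl hu0))).mul
      (continuousAt_const.sub ((continuousAt_const.mul continuousAt_id).rpow_const
        (Or.inl hcu)))).continuousWithinAt

lemma max_one_sub_rpow_eq_ite {α x : ℝ} (hα : 0 < α) (hx : 0 ≤ x) :
    max (1 - x ^ α) 0 = if x ≤ 1 then 1 - x ^ α else 0 := by
  split_ifs with h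
  · exact max_eq_left (sub_nonneg.2 (rpow_le_one hx h hα.le))
  · exact max_eq_right (sub_nonpos.2 (one_le_rpow (not_le.1 h).le hα.le))

lemma integral_pareto_williamson {α c : ℝ} (hα : 0 < α) (hc : 0 < c) :
    ∫ u, max (1 - (c * u) ^ α) 0 ∂pareto α = max (1 - c ^ α) 0 ^ 2 := by
  have htrunc : ∀ u ∈ Set.Ici (1 : ℝ), 2 * α * u ^ (-2 * α - 1) * max (1 - (c * u) ^ α) 0 =
      (Set.Iic c⁻¹).indicator (fun u => 2 * α * u ^ (-2 * α - 1) * (1 - (c * u) ^ α)) u := by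
    intro u (hu : 1 ≤ u)
    have hcu : c * u ≤ 1 ↔ u ≤ c⁻¹ := by rw [← one_div, le_div_iff₀' hc]
    rw [max_one_sub_rpow_eq_ite hα (by positivity), Set.indicator_apply]
    simp only [Set.mem_Iic, hcu, mul_ite, mul_zero]
  rw [integral_pareto hα.le, setIntegral_congr_fun measurableSet_Ici htrunc,
    setIntegral_indicator measurableSet_Iic, Set.Ici_inter_Iic]
  rcases le_or_gt c 1 with hc1 | hc1
  · rw [integral_Icc_eq_integral_Ioc, ← intervalIntegral.integral_of_le ((one_le_inv₀ hc).2 hc1),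
      integral_pareto_density_mul_one_sub_rpow α hc,
      max_eq_left (sub_nonneg.2 (rpow_le_one hc.le hc1 hα.le))]
  · rw [Set.Icc_eq_empty_of_lt ((inv_lt_one₀ hc).2 hc1), Measure.restrict_empty,
      integral_zero_measure, max_eq_right (sub_nonpos.2 (one_le_rpow hc1.le hα.le))]
    norm_num

lemma integrable_pareto_williamson {α c : ℝ} (hα : 0 < α) (hc : 0 ≤ c) :
    Integrable (fun u => max (1 - (c * u) ^ α) 0) (pareto α) := by
  have := isProbabilityMeasure_pareto hα
  refine Integrable.of_bound (Measurable.aestronglyMeasurable (by fun_prop)) 1 ?_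
  filter_upwards [ae_one_le_pareto α] with u hu
  have : 0 ≤ (c * u) ^ α := rpow_nonneg (mul_nonneg hc (zero_le_one.trans hu)) α
  rw [norm_of_nonneg (le_max_right _ _)]
  exact max_le (by linarith) zero_le_one

lemma rpow_min_div_max_mem_Icc {α x y : ℝ} (hα : 0 ≤ α) (hx : 0 ≤ x) (hy : 0 ≤ y) :
    (min x y / max x y) ^ α ∈ Set.Icc 0 1 :=
  have hM : 0 ≤ max x y := hx.trans (le_max_left x y)
  have hxy : 0 ≤ min x y / max x y := div_nonneg (le_min hx hy) hM
  ⟨rpow_nonneg hxy α, rpow_le_one hxy (div_le_one_of_le₀ min_le_max hM) hα⟩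

lemma integral_kendall {α x y : ℝ} (hα : 0 ≤ α) (hx : 0 ≤ x) (hy : 0 ≤ y) {g : ℝ → ℝ}
    (hg : Measurable g) (hgi : Integrable (fun u => g (max x y * u)) (pareto α)) :
    ∫ w, g w ∂kendall α x y = (min x y / max x y) ^ α * ∫ u, g (max x y * u) ∂pareto α
      + (1 - (min x y / max x y) ^ α) * g (max x y) := by
  obtain ⟨hρ0, hρ1⟩ := rpow_min_div_max_mem_Icc hα hx hy
  rw [kendall, integral_map (by fun_prop) hg.aestronglyMeasurable,
    integral_add_measure (hgi.smul_measure ENNReal.ofReal_ne_top)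
      ((integrable_dirac (by simp)).smul_measure ENNReal.ofReal_ne_top),
    integral_smul_measure, integral_smul_measure, integral_dirac, ENNReal.toReal_ofReal hρ0,
    ENNReal.toReal_ofReal (sub_nonneg.2 hρ1), mul_one, smul_eq_mul, smul_eq_mul]

lemma max_one_sub_mul_mul_max_one_sub {ρ s : ℝ} (hρ0 : 0 ≤ ρ) (hρ1 : ρ ≤ 1) :
    max (1 - ρ * s) 0 * max (1 - s) 0 = ρ * max (1 - s) 0 ^ 2 + (1 - ρ) * max (1 - s) 0 := by
  rcases le_or_gt s 1 with hs1 | hs1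
  · rw [max_eq_left (sub_nonneg.2 hs1), max_eq_left (by nlinarith)]
    ring
  · rw [max_eq_right (by linarith : 1 - s ≤ 0)]
    ring

/-- the Williamson transform of δ_x ▵_α δ_y factorizes:
∫ (1 − (w/t)^α)₊ (δ_x ▵_α δ_y)(dw) = (1 − (x/t)^α)₊ · (1 − (y/t)^α)₊ for every t > 0. -/
theorem kendall_deltas_williamson_mul
    (α x y : ℝ) (hα : 0 < α) (hx : 0 ≤ x) (hy : 0 ≤ y) (hM : 0 < max x y)
    (t : ℝ) (ht : 0 < t) :
    ∫ w, max (1 - (w / t) ^ α) 0 ∂(kendall α x y)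
      = max (1 - (x / t) ^ α) 0 * max (1 - (y / t) ^ α) 0 := by
  have hc : 0 < max x y / t := div_pos hM ht
  obtain ⟨hρ0, hρ1⟩ := rpow_min_div_max_mem_Icc hα.le hx hy
  have hmeas : Measurable fun w => max (1 - (w / t) ^ α) 0 := by fun_prop
  rw [integral_kendall hα.le hx hy hmeas
    (by simpa only [mul_div_right_comm] using integrable_pareto_williamson hα hc.le)]
  simp only [mul_div_right_comm]
  rw [integral_pareto_williamson hα hc, ← max_one_sub_mul_mul_max_one_sub hρ0 hρ1,
    ← mul_rpow (div_nonneg (le_min hx hy) hM.le) hc.le, div_mul_div_cancel₀ hM.ne']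
  rcases le_total x y with h | h
  · rw [min_eq_left h, max_eq_right h]
  · rw [min_eq_right h, max_eq_left h, mul_comm]
end

section
/- Let ν be a probability measure on [0,∞) with ν((0,∞)) > 0, with cumulative distribution function F, Williamson transform G and truncated α-moment H, and for an integer n ≥ 2 define F_n(t) = G(t)^{n−1}( n t^{−α} H(t) + G(t) ) for t > 0. Then lim_{x→∞} x^{2α} ( F(x)^n − F_n(x) ) / H(x)^2 = n(n−1)/2; equivalently, the tail F̄_n = 1 − F_n satisfies F̄_n(x) − (1 − F(x)^n) = (1/2) n(n−1) H(x)^2 x^{−2α} (1 + o(1)) as x → ∞. -/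
/-!
Writing `c(t) = t^{-α} H(t)`, the Williamson transform satisfies `G = F - c` for `t > 0`, so
`F^n - F_n = (G + c)^n - G^n - n c G^{n-1} = c^2 P(G, c)` where `P` collects the binomial terms of
order at least two in `c`. Since `x^{2α} c(x)^2 / H(x)^2 = 1`, the quotient equals `P(G(x), c(x))`.
Dominated convergence gives `G → 1`, and `F → 1`, hence `c → 0`, so the quotient tends to
`P(1, 0) = n(n-1)/2`.
-/

open MeasureTheory Filter Real Topology

def binomialTail {R : Type*} [CommSemiring R] (m : ℕ) (b c : R) : R :=
  ∑ k ∈ Finset.range (m + 1), b ^ (m - k) * c ^ k * ((m + 2).choose (k + 2) : R)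

theorem add_pow_sub_eq_sq_mul_binomialTail {R : Type*} [CommRing R] (m : ℕ) (b c : R) :
    (b + c) ^ (m + 2) - b ^ (m + 1) * ((m + 2) * c + b) = c ^ 2 * binomialTail m b c := by
  have hsum : ∑ k ∈ Finset.range (m + 1), c ^ (k + 2) * b ^ (m + 2 - (k + 2)) *
      ((m + 2).choose (k + 2) : R) = c ^ 2 * binomialTail m b c := by
    rw [binomialTail, Finset.mul_sum]
    refine Finset.sum_congr rfl fun k _ => ?_
    rw [show m + 2 - (k + 2) = m - k by omega]
    ring
  rw [add_comm b c, add_pow, Finset.sum_range_succ', Finset.sum_range_succ', hsum]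
  simp only [zero_add, Nat.choose_one_right, Nat.choose_zero_right, Nat.sub_zero,
    show m + 2 - 1 = m + 1 by omega]
  push_cast
  ring

theorem binomialTail_one_zero {R : Type*} [CommSemiring R] (m : ℕ) :
    binomialTail m (1 : R) 0 = (m + 2).choose 2 := by
  rw [binomialTail, Finset.sum_eq_single_of_mem 0 (by simp)]
  · simp
  · intro k _ hk
    simp [zero_pow hk]

theorem continuous_binomialTail {R : Type*} [CommSemiring R] [TopologicalSpace R]
    [IsTopologicalSemiring R] (m : ℕ) :
    Continuous fun p : R × R => binomialTail m p.1 p.2 := by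
  unfold binomialTail
  fun_prop

theorem rpow_two_mul_mul_rpow_neg_mul_sq_div_sq {t h : ℝ} (ht : 0 < t) (hh : h ≠ 0) (α : ℝ) :
    t ^ (2 * α) * (t ^ (-α) * h) ^ 2 / h ^ 2 = 1 := by
  rw [mul_pow, ← rpow_natCast, ← rpow_mul ht.le, ← mul_assoc, ← rpow_add ht]
  field_simp
  norm_num

section Williamson

variable {ν : Measure ℝ} {α : ℝ}

theorem integrableOn_rpow_Icc [IsFiniteMeasure ν] (hα : 0 ≤ α) (t : ℝ) :
    IntegrableOn (fun x => x ^ α) (Set.Icc 0 t) ν := by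
  refine Measure.integrableOn_of_bounded (M := t ^ α) (measure_ne_top ν _)
    (measurable_id.pow_const α).aestronglyMeasurable ?_
  filter_upwards [ae_restrict_mem measurableSet_Icc] with x hx
  rw [norm_of_nonneg (rpow_nonneg hx.1 α)]
  exact rpow_le_rpow hx.1 hx.2 hα

theorem ae_nonneg_of_measure_Iio_eq_zero (hν : ν (Set.Iio 0) = 0) : ∀ᵐ x ∂ν, 0 ≤ x := by
  simp only [ae_iff, not_le]
  exact hν

theorem integral_max_one_sub_div_rpow_eq [IsFiniteMeasure ν] (hα : 0 ≤ α)
    (hν : ν (Set.Iio 0) = 0) {t : ℝ} (ht : 0 < t) :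
    ∫ x, max (1 - (x / t) ^ α) 0 ∂ν
      = ν.real (Set.Iic t) - t ^ (-α) * ∫ x in Set.Icc 0 t, x ^ α ∂ν := by
  have hind : ∀ᵐ x ∂ν, max (1 - (x / t) ^ α) 0
      = (Set.Icc 0 t).indicator (fun x => 1 - x ^ α * t ^ (-α)) x := by
    filter_upwards [ae_nonneg_of_measure_Iio_eq_zero hν] with x hx
    have hdiv : (x / t) ^ α = x ^ α * t ^ (-α) := by
      rw [div_rpow hx ht.le, rpow_neg ht.le, div_eq_mul_inv]
    by_cases hxt : x ≤ t
    · rw [Set.indicator_of_mem (Set.mem_Icc.2 ⟨hx, hxt⟩), ← hdiv, max_eq_left]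
      linarith [rpow_le_one (div_nonneg hx ht.le) (div_le_one_of_le₀ hxt ht.le) hα]
    · rw [Set.indicator_of_notMem (fun hmem => hxt hmem.2), max_eq_right]
      linarith [one_le_rpow ((one_le_div ht).2 (le_of_not_ge hxt)) hα]
  have hIcc : ν.real (Set.Icc 0 t) = ν.real (Set.Iic t) := by
    rw [← Set.Iic_inter_Ici, measureReal_def, measure_inter_conull (by rwa [Set.compl_Ici]),
      measureReal_def]
  rw [integral_congr_ae hind, integral_indicator measurableSet_Icc,
    integral_sub (integrableOn_const (C := (1 : ℝ)) (measure_ne_top ν _))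
      ((integrableOn_rpow_Icc hα t).mul_const _),
    integral_mul_const, setIntegral_const, smul_eq_mul, mul_one, hIcc]
  ring

theorem tendsto_integral_max_one_sub_div_rpow_atTop [IsFiniteMeasure ν] (hα : 0 < α)
    (hν : ν (Set.Iio 0) = 0) :
    Tendsto (fun t => ∫ x, max (1 - (x / t) ^ α) 0 ∂ν) atTop (𝓝 (ν.real Set.univ)) := by
  have hν' := ae_nonneg_of_measure_Iio_eq_zero hν
  rw [show ν.real Set.univ = ∫ _, (1 : ℝ) ∂ν by simp]
  refine tendsto_integral_filter_of_dominated_convergence (fun _ => 1)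
    (Eventually.of_forall fun t => by have := hα.le; fun_prop) ?_ (integrable_const 1) ?_
  · filter_upwards [eventually_gt_atTop 0] with t ht
    filter_upwards [hν'] with x hx
    rw [norm_of_nonneg (le_max_right _ _)]
    exact max_le (by linarith [rpow_nonneg (div_nonneg hx ht.le) α]) zero_le_one
  · refine Eventually.of_forall fun x => ?_
    have hdiv : Tendsto (fun t : ℝ => (x / t) ^ α) atTop (𝓝 0) := by
      simpa [zero_rpow hα.ne', Function.comp_def] using
        ((continuousAt_rpow_const 0 α (Or.inr hα.le)).tendsto.comp
          (tendsto_const_nhds.div_atTop tendsto_id))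
    simpa using
      ((tendsto_const_nhds (x := (1 : ℝ))).sub hdiv).max (tendsto_const_nhds (x := (0 : ℝ)))

theorem eventually_pos_setIntegral_rpow_Icc [IsFiniteMeasure ν] (hα : 0 ≤ α)
    (hpos : 0 < ν (Set.Ioi 0)) : ∀ᶠ t in atTop, 0 < ∫ x in Set.Icc 0 t, x ^ α ∂ν := by
  have hlim := tendsto_measure_Iic_atTop (ν.restrict (Set.Ioi 0))
  rw [Measure.restrict_apply_univ] at hlim
  filter_upwards [hlim.eventually_const_lt hpos] with t ht
  rw [Measure.restrict_apply measurableSet_Iic] at ht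
  rw [setIntegral_pos_iff_support_of_nonneg_ae ?_ (integrableOn_rpow_Icc hα t)]
  · refine ht.trans_le (measure_mono fun x hx => ?_)
    exact ⟨(rpow_pos_of_pos hx.2 α).ne', hx.2.le, hx.1⟩
  · filter_upwards [ae_restrict_mem measurableSet_Icc] with x hx
    exact rpow_nonneg hx.1 α

end Williamson

/-- with F_n(t) = G(t)^{n−1}( n t^{−α} H(t) + G(t) ) the cdf of the n-fold
Kendall convolution power (n ≥ 2) and ν((0,∞)) > 0, one has
lim_{x→∞} x^{2α} ( F(x)^n − F_n(x) ) / H(x)^2 = n(n−1)/2, i.e. the tail satisfies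
F̄_n(x) − (1 − F(x)^n) = (1/2) n(n−1) H(x)^2 x^{−2α} (1 + o(1)) as x → ∞. -/
theorem kendall_power_tail_asymptotics
    (α : ℝ) (hα : 0 < α)
    (ν : Measure ℝ) [IsProbabilityMeasure ν] (hν : ν (Set.Iio 0) = 0)
    (hpos : 0 < ν (Set.Ioi 0))
    (F G H : ℝ → ℝ)
    (hF : ∀ t, F t = (ν (Set.Iic t)).toReal)
    (hG : ∀ t, 0 < t → G t = ∫ x, max (1 - (x / t) ^ α) 0 ∂ν)
    (hH : ∀ t, 0 < t → H t = ∫ x in Set.Icc 0 t, x ^ α ∂ν)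
    (n : ℕ) (hn : 2 ≤ n)
    (Fn : ℝ → ℝ)
    (hFn : ∀ t, 0 < t → Fn t = (G t) ^ (n - 1) * ((n : ℝ) * t ^ (-α) * H t + G t)) :
    Tendsto (fun x => x ^ (2 * α) * ((F x) ^ n - Fn x) / (H x) ^ 2) atTop
      (𝓝 ((n : ℝ) * ((n : ℝ) - 1) / 2)) := by
  obtain ⟨m, rfl⟩ : ∃ m, n = m + 2 := ⟨n - 2, by omega⟩
  have hF_eq : ∀ t, 0 < t → F t = G t + t ^ (-α) * H t := fun t ht => by
    rw [hG t ht, hH t ht, integral_max_one_sub_div_rpow_eq hα.le hν ht, hF, measureReal_def]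
    ring
  have hG_lim : Tendsto G atTop (𝓝 1) := by
    rw [← probReal_univ (μ := ν)]
    refine (tendsto_integral_max_one_sub_div_rpow_atTop hα hν).congr' ?_
    filter_upwards [eventually_gt_atTop 0] with t ht using (hG t ht).symm
  have hF_lim : Tendsto F atTop (𝓝 1) :=
    (ProbabilityTheory.tendsto_cdf_atTop (μ := ν)).congr fun t => by
      rw [ProbabilityTheory.cdf_eq_real, hF, measureReal_def]
  have hH_lim : Tendsto (fun t => t ^ (-α) * H t) atTop (𝓝 0) := by
    refine (sub_self (1 : ℝ) ▸ hF_lim.sub hG_lim).congr' ?_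
    filter_upwards [eventually_gt_atTop 0] with t ht
    rw [hF_eq t ht, add_sub_cancel_left]
  have hlim := ((continuous_binomialTail m).tendsto (1, 0)).comp (hG_lim.prodMk_nhds hH_lim)
  rw [binomialTail_one_zero, Nat.cast_choose_two] at hlim
  refine hlim.congr' ?_
  filter_upwards [eventually_gt_atTop 0, eventually_pos_setIntegral_rpow_Icc hα.le hpos]
    with t ht hHt
  rw [← hH t ht] at hHt
  simp only [Function.comp_apply]
  rw [hFn t ht, hF_eq t ht, show m + 2 - 1 = m + 1 by omega, Nat.cast_add, Nat.cast_ofNat,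
    mul_assoc ((m : ℝ) + 2), add_pow_sub_eq_sq_mul_binomialTail, ← mul_assoc,
    mul_div_right_comm,
    rpow_two_mul_mul_rpow_neg_mul_sq_div_sq ht hHt.ne', one_mul]
end

section
/- Let ν be a probability measure on [0,∞) with cumulative distribution function F such that the tail F̄ = 1 − F is everywhere positive and regularly varying at infinity with index θ − α for some 0 < θ < α, i.e. for every λ > 0, F̄(λx)/F̄(x) → λ^{θ−α} as x → ∞. Then for every integer n ≥ 1, the tail F̄_n = 1 − F_n satisfies lim_{x→∞} F̄_n(x) / ( n F̄(x) ) = 1. -/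
open MeasureTheory Filter Real Topology

/-!
Write `F̄ = 1 - F` and `m(t) = t^{-α} H(t)`. Then `G = 1 - F̄ - m` and
`n t^{-α} H + G = 1 - F̄ + (n-1) m`, so with `x = 1 - F̄ - m` and `S = Σ_{i<n-1} x^i`,
`(1 - F_n) / F̄ = S + x^{n-1} + (m / F̄) (S - (n-1) x^{n-1})`.
The first two terms tend to `n` and the bracket to `0`, so it suffices that `m = O(F̄)`; the
limit of `m / F̄` cancels out. Splitting `[0,t]` at `t/2` gives
`m(t) ≤ 2^{-α} m(t/2) + F̄(t/2)`, and regular variation gives `F̄(t/2) ≤ K F̄(t)` eventually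
for some `K < 2^α`. Hence `m / F̄` obeys the contracting recursion
`R(t) ≤ 2^{-α} K R(t/2) + K` and stays bounded.
-/

open Set Asymptotics

theorem tendsto_one_sub_pow_mul_div {ι : Type*} {l : Filter ι} {w m : ι → ℝ} (k : ℕ)
    (hw : Tendsto w l (𝓝 0)) (hw₀ : ∀ᶠ i in l, w i ≠ 0) (hm : m =O[l] w) :
    Tendsto (fun i => (1 - (1 - w i - m i) ^ k * (1 - w i + k * m i)) / w i) l
      (𝓝 (k + 1)) := by
  set x := fun i => 1 - w i - m i
  set S := fun i => ∑ j ∈ Finset.range k, x i ^ j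
  have hx : Tendsto x l (𝓝 1) := by
    simpa using (tendsto_const_nhds.sub hw).sub (hm.trans_tendsto hw)
  have hS : Tendsto S l (𝓝 k) := by
    simpa using tendsto_finsetSum (Finset.range k) fun j _ => hx.pow j
  have hxk : Tendsto (fun i => x i ^ k) l (𝓝 1) := by simpa using hx.pow k
  have hcross : Tendsto (fun i => (S i - k * x i ^ k) * m i / w i) l (𝓝 0) := by
    have h0 : (fun i => S i - k * x i ^ k) =o[l] fun _ => (1 : ℝ) :=
      (isLittleO_one_iff ℝ).2 (by simpa using hS.sub (hxk.const_mul (k : ℝ)))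
    simpa using (h0.mul_isBigO hm).tendsto_div_nhds_zero
  have hsum := (hS.add hxk).add hcross
  rw [add_zero] at hsum
  refine hsum.congr' ?_
  filter_upwards [hw₀] with i hi
  have hgeom : 1 - x i ^ k = (w i + m i) * S i := by
    have := geom_sum_mul (x i) k
    simp only [x, S] at this ⊢
    linear_combination this
  rw [eq_div_iff hi]
  simp only [x] at hgeom ⊢
  field_simp
  linear_combination -hgeom

theorem exists_eventually_le_of_le_mul_comp_div_add {R : ℝ → ℝ} {l q c : ℝ} (hl : 1 < l)
    (hq₀ : 0 ≤ q) (hq₁ : q < 1) (hstep : ∀ᶠ t in atTop, R t ≤ q * R (t / l) + c)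
    (hwin : ∀ᶠ T in atTop, BddAbove (R '' Icc T (l * T))) :
    ∃ C, ∀ᶠ t in atTop, R t ≤ C := by
  obtain ⟨T₀, hT₀⟩ := eventually_atTop.1 (hstep.and (eventually_ge_atTop 1))
  obtain ⟨T, hT, ⟨M₀, hM₀⟩⟩ := ((eventually_ge_atTop T₀).and hwin).exists
  have hTpos : 0 < T := one_pos.trans_le ((hT₀ T hT).2)
  set M := max M₀ (c / (1 - q))
  have hM : q * M + c ≤ M := by
    have : c ≤ (1 - q) * M := (div_le_iff₀' (by linarith)).1 (le_max_right _ _)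
    linarith
  have hwinM : ∀ t ∈ Icc T (l * T), R t ≤ M := fun t ht =>
    (hM₀ (mem_image_of_mem R ht)).trans (le_max_left _ _)
  have key : ∀ k : ℕ, ∀ t ∈ Icc T (l ^ k * T), R t ≤ M := by
    intro k
    induction k with
    | zero =>
      intro t ht
      exact hwinM t ⟨ht.1, ht.2.trans (by nlinarith)⟩
    | succ k ih =>
      rintro t ⟨hTt, htk⟩
      by_cases hlT : t ≤ l * T
      · exact hwinM t ⟨hTt, hlT⟩
      have hl₀ : 0 < l := one_pos.trans hl
      have hmid : t / l ∈ Icc T (l ^ k * T) := by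
        constructor
        · rw [le_div_iff₀ hl₀]; linarith
        · rw [div_le_iff₀ hl₀]
          linarith [show l ^ (k + 1) * T = l ^ k * T * l by ring]
      calc R t ≤ q * R (t / l) + c := (hT₀ t (hT.trans hTt)).1
        _ ≤ q * M + c := by gcongr; exact ih _ hmid
        _ ≤ M := hM
  refine ⟨M, eventually_atTop.2 ⟨T, fun t ht => ?_⟩⟩
  obtain ⟨k, hk⟩ := pow_unbounded_of_one_lt (t / T) hl
  exact key k t ⟨ht, ((div_lt_iff₀ hTpos).1 hk).le⟩

section TruncatedMoment

variable {ν : Measure ℝ} [IsFiniteMeasure ν] {α : ℝ}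

theorem setIntegral_rpow_le_mul_measureReal {s : Set ℝ} {t : ℝ} (hα : 0 ≤ α)
    (hs : s ⊆ Icc 0 t) :
    ∫ x in s, x ^ α ∂ν ≤ t ^ α * ν.real s := by
  refine (Real.le_norm_self _).trans (norm_setIntegral_le_of_norm_le_const (measure_lt_top ν s)
    fun x hx => ?_)
  rw [norm_of_nonneg (rpow_nonneg (hs hx).1 _)]
  exact rpow_le_rpow (hs hx).1 (hs hx).2 hα

theorem setIntegral_Icc_rpow_le_add {s t : ℝ} (hα : 0 ≤ α) (hs : 0 ≤ s) (hst : s ≤ t) :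
    ∫ x in Icc 0 t, x ^ α ∂ν ≤
      ∫ x in Icc 0 s, x ^ α ∂ν + t ^ α * ν.real (Ioc s t) := by
  have hint : IntegrableOn (fun x : ℝ => x ^ α) (Icc 0 t) ν :=
    (continuous_rpow_const hα).continuousOn.integrableOn_compact isCompact_Icc
  rw [← Icc_union_Ioc_eq_Icc hs hst, setIntegral_union
    (disjoint_left.2 fun x h₁ h₂ => h₂.1.not_ge h₁.2) measurableSet_Ioc
    (hint.mono_set (Icc_subset_Icc_right hst)) (hint.mono_set (Ioc_subset_Icc_self.trans
      (Icc_subset_Icc_left hs)))]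
  gcongr
  exact setIntegral_rpow_le_mul_measureReal hα
    (Ioc_subset_Icc_self.trans (Icc_subset_Icc_left hs))

theorem rpow_neg_mul_setIntegral_rpow_le_measureReal_univ {t : ℝ} (hα : 0 ≤ α)
    (ht : 0 < t) :
    t ^ (-α) * ∫ x in Icc 0 t, x ^ α ∂ν ≤ ν.real univ :=
  calc t ^ (-α) * ∫ x in Icc 0 t, x ^ α ∂ν ≤ t ^ (-α) * (t ^ α * ν.real (Icc 0 t)) := by
        gcongr
        exact setIntegral_rpow_le_mul_measureReal hα subset_rfl
    _ ≤ ν.real univ := by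
        rw [← mul_assoc, ← rpow_add ht, neg_add_cancel, rpow_zero, one_mul]
        exact measureReal_mono (subset_univ _)

theorem rpow_neg_mul_setIntegral_rpow_le_half {t : ℝ} (hα : 0 ≤ α) (ht : 0 < t) :
    t ^ (-α) * ∫ x in Icc 0 t, x ^ α ∂ν ≤
      2 ^ (-α) * ((t / 2) ^ (-α) * ∫ x in Icc 0 (t / 2), x ^ α ∂ν) +
        ν.real (Ioi (t / 2)) := by
  have hsplit := setIntegral_Icc_rpow_le_add (ν := ν) hα (by positivity : 0 ≤ t / 2)
    (by linarith : t / 2 ≤ t)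
  have hIoc : ν.real (Ioc (t / 2) t) ≤ ν.real (Ioi (t / 2)) :=
    measureReal_mono Ioc_subset_Ioi_self
  have hhalf : t ^ (-α) = 2 ^ (-α) * (t / 2) ^ (-α) := by
    rw [div_rpow ht.le zero_le_two]; field_simp
  calc t ^ (-α) * ∫ x in Icc 0 t, x ^ α ∂ν
      ≤ t ^ (-α) * (∫ x in Icc 0 (t / 2), x ^ α ∂ν + t ^ α * ν.real (Ioi (t / 2))) := by
        gcongr
        exact hsplit.trans (by gcongr)
    _ = _ := by
        rw [mul_add, ← mul_assoc, ← rpow_add ht, neg_add_cancel, rpow_zero, one_mul, hhalf]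
        ring

theorem rpow_neg_mul_setIntegral_rpow_isBigO_measureReal_Ioi {K : ℝ} (hα : 0 ≤ α)
    (hK : K < 2 ^ α) (htail : ∀ t, 0 < ν.real (Ioi t))
    (hdom : ∀ᶠ t in atTop, ν.real (Ioi (t / 2)) ≤ K * ν.real (Ioi t)) :
    (fun t => t ^ (-α) * ∫ x in Icc 0 t, x ^ α ∂ν) =O[atTop] fun t => ν.real (Ioi t) := by
  set m : ℝ → ℝ := fun t => t ^ (-α) * ∫ x in Icc 0 t, x ^ α ∂ν
  set w : ℝ → ℝ := fun t => ν.real (Ioi t)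
  have hm₀ : ∀ t, 0 ≤ t → 0 ≤ m t := fun t ht =>
    mul_nonneg (rpow_nonneg ht _) (setIntegral_nonneg measurableSet_Icc fun x hx =>
      rpow_nonneg hx.1 _)
  have hK₀ : 0 ≤ K := by
    obtain ⟨t, ht⟩ := hdom.exists
    nlinarith [htail t, htail (t / 2)]
  have hq₁ : 2 ^ (-α) * K < 1 := by
    rwa [rpow_neg zero_le_two, inv_mul_lt_iff₀ (by positivity), mul_one]
  have hstep : ∀ᶠ t in atTop, m t / w t ≤ 2 ^ (-α) * K * (m (t / 2) / w (t / 2)) + K := by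
    filter_upwards [hdom, eventually_gt_atTop 0] with t hdomt ht
    rw [div_le_iff₀ (htail t)]
    have hR : 0 ≤ m (t / 2) / w (t / 2) := div_nonneg (hm₀ _ (by positivity)) (htail _).le
    calc m t ≤ 2 ^ (-α) * m (t / 2) + w (t / 2) :=
          rpow_neg_mul_setIntegral_rpow_le_half hα ht
      _ = (2 ^ (-α) * (m (t / 2) / w (t / 2)) + 1) * w (t / 2) := by
          rw [add_mul, mul_assoc, div_mul_cancel₀ _ (htail (t / 2)).ne', one_mul]
      _ ≤ (2 ^ (-α) * (m (t / 2) / w (t / 2)) + 1) * (K * w t) := by gcongr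
      _ = (2 ^ (-α) * K * (m (t / 2) / w (t / 2)) + K) * w t := by ring
  have hwin : ∀ᶠ T in atTop, BddAbove ((fun t => m t / w t) '' Icc T (2 * T)) := by
    filter_upwards [eventually_gt_atTop 0] with T hT
    refine ⟨ν.real univ / w (2 * T), ?_⟩
    rintro _ ⟨t, ht, rfl⟩
    exact div_le_div₀ measureReal_nonneg
      (rpow_neg_mul_setIntegral_rpow_le_measureReal_univ hα (hT.trans_le ht.1)) (htail _)
      (measureReal_mono (Ioi_subset_Ioi ht.2))
  obtain ⟨C, hC⟩ := exists_eventually_le_of_le_mul_comp_div_add (R := fun t => m t / w t)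
    (q := 2 ^ (-α) * K) (c := K) one_lt_two (by positivity) hq₁ hstep hwin
  refine IsBigO.of_bound C ?_
  filter_upwards [hC, eventually_gt_atTop 0] with t hCt ht
  rw [norm_of_nonneg (hm₀ t ht.le), norm_of_nonneg (htail t).le]
  exact (div_le_iff₀ (htail t)).1 hCt

theorem integral_max_one_sub_div_rpow {t : ℝ} (hα : 0 ≤ α) (hν : ν (Iio 0) = 0)
    (ht : 0 < t) :
    ∫ x, max (1 - (x / t) ^ α) 0 ∂ν =
      ν.real (Iic t) - t ^ (-α) * ∫ x in Icc 0 t, x ^ α ∂ν := by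
  have hsupp : ∀ᵐ x ∂ν, x ∈ Ici 0 := by
    refine ae_iff.2 ?_
    convert hν using 2
    ext x
    simp
  have hpoint : ∀ x ∈ Ici (0 : ℝ),
      max (1 - (x / t) ^ α) 0 = (Icc 0 t).indicator (fun x => 1 - t ^ (-α) * x ^ α) x := by
    intro x hx
    by_cases hxt : x ≤ t
    · rw [indicator_of_mem (show x ∈ Icc 0 t from ⟨hx, hxt⟩), div_rpow hx ht.le,
        rpow_neg ht.le, div_eq_inv_mul, max_eq_left]
      rw [sub_nonneg, ← div_eq_inv_mul, ← div_rpow hx ht.le]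
      exact rpow_le_one (div_nonneg hx ht.le) ((div_le_one ht).2 hxt) hα
    · rw [indicator_of_notMem fun h => hxt h.2, max_eq_right]
      rw [sub_nonpos]
      exact one_le_rpow ((one_le_div ht).2 (not_le.1 hxt).le) hα
  have hint : IntegrableOn (fun x : ℝ => x ^ α) (Icc 0 t) ν :=
    (continuous_rpow_const hα).continuousOn.integrableOn_compact isCompact_Icc
  have hIcc : ν.real (Icc 0 t) = ν.real (Iic t) := by
    rw [← Iic_inter_Ici, measureReal_def, measureReal_def,
      ← Measure.restrict_apply measurableSet_Iic, Measure.restrict_eq_self_of_ae_mem hsupp]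
  rw [integral_congr_ae (hsupp.mono hpoint), integral_indicator measurableSet_Icc,
    integral_sub (integrable_const 1) (hint.const_mul _), integral_const_mul, setIntegral_const,
    smul_eq_mul, mul_one, hIcc]

end TruncatedMoment

theorem kendall_power_tail_regvar_general
    (α θ : ℝ) (hα : 0 < α) (hθ : 0 < θ)
    (ν : Measure ℝ) [IsProbabilityMeasure ν] (hν : ν (Set.Iio 0) = 0)
    (F G H : ℝ → ℝ)
    (hF : ∀ t, F t = (ν (Set.Iic t)).toReal)
    (hG : ∀ t, 0 < t → G t = ∫ x, max (1 - (x / t) ^ α) 0 ∂ν)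
    (hH : ∀ t, 0 < t → H t = ∫ x in Set.Icc 0 t, x ^ α ∂ν)
    (htail : ∀ x, F x < 1)
    (hRV : ∀ l, 0 < l →
      Tendsto (fun x => (1 - F (l * x)) / (1 - F x)) atTop (𝓝 (l ^ (θ - α))))
    (n : ℕ) (hn : 1 ≤ n)
    (Fn : ℝ → ℝ)
    (hFn : ∀ t, 0 < t → Fn t = (G t) ^ (n - 1) * ((n : ℝ) * t ^ (-α) * H t + G t)) :
    Tendsto (fun x => (1 - Fn x) / ((n : ℝ) * (1 - F x))) atTop (𝓝 1) := by
  obtain ⟨k, rfl⟩ : ∃ k, n = k + 1 := ⟨n - 1, by omega⟩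
  have hFbar : ∀ t, 1 - F t = ν.real (Ioi t) := fun t => by
    rw [hF, ← compl_Iic, probReal_compl_eq_one_sub measurableSet_Iic, measureReal_def]
  have hFbar₀ : ∀ t, 0 < ν.real (Ioi t) := fun t => hFbar t ▸ sub_pos.2 (htail t)
  obtain ⟨K, hK, hKα⟩ : ∃ K, 2 ^ (α - θ) < K ∧ K < (2 : ℝ) ^ α :=
    exists_between (rpow_lt_rpow_of_exponent_lt one_lt_two (by linarith))
  have hdom : ∀ᶠ t in atTop, ν.real (Ioi (t / 2)) ≤ K * ν.real (Ioi t) := by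
    have h := hRV 2⁻¹ (by norm_num)
    rw [inv_rpow zero_le_two, ← rpow_neg zero_le_two, neg_sub] at h
    filter_upwards [h.eventually_le_const hK] with t ht
    rwa [inv_mul_eq_div, hFbar, hFbar, div_le_iff₀ (hFbar₀ t)] at ht
  have hm : (fun t => t ^ (-α) * H t) =O[atTop] fun t => 1 - F t := by
    simp only [hFbar]
    refine (rpow_neg_mul_setIntegral_rpow_isBigO_measureReal_Ioi hα.le hKα hFbar₀ hdom).congr'
      ?_ .rfl
    filter_upwards [eventually_gt_atTop 0] with t ht
    rw [hH t ht]
  have hw : Tendsto (fun t => 1 - F t) atTop (𝓝 0) := by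
    have h := (ENNReal.tendsto_toReal (measure_ne_top ν univ)).comp (tendsto_measure_Iic_atTop ν)
    simpa [← hF] using (tendsto_const_nhds (x := (1 : ℝ))).sub h
  have hlim := (tendsto_one_sub_pow_mul_div k hw
    (.of_forall fun t => (sub_pos.2 (htail t)).ne') hm).div_const ((k : ℝ) + 1)
  rw [div_self (by positivity)] at hlim
  refine hlim.congr' ?_
  filter_upwards [eventually_gt_atTop 0] with t ht
  rw [hFn t ht, hG t ht, integral_max_one_sub_div_rpow hα.le hν ht, ← hH t ht, measureReal_def,
    ← hF t]
  push_cast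
  field_simp
  ring

/-- if the tail F̄ = 1 − F is everywhere positive and regularly varying at
infinity with index θ − α, 0 < θ < α, then for every n ≥ 1 the tail of the n-fold Kendall
convolution power satisfies F̄_n(x) / (n F̄(x)) → 1 as x → ∞. -/
theorem kendall_power_tail_regvar
    (α θ : ℝ) (hα : 0 < α) (hθ : 0 < θ) (hθα : θ < α)
    (ν : Measure ℝ) [IsProbabilityMeasure ν] (hν : ν (Set.Iio 0) = 0)
    (F G H : ℝ → ℝ)
    (hF : ∀ t, F t = (ν (Set.Iic t)).toReal)
    (hG : ∀ t, 0 < t → G t = ∫ x, max (1 - (x / t) ^ α) 0 ∂ν)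
    (hH : ∀ t, 0 < t → H t = ∫ x in Set.Icc 0 t, x ^ α ∂ν)
    (htail : ∀ x, F x < 1)
    (hRV : ∀ l, 0 < l →
      Tendsto (fun x => (1 - F (l * x)) / (1 - F x)) atTop (𝓝 (l ^ (θ - α))))
    (n : ℕ) (hn : 1 ≤ n)
    (Fn : ℝ → ℝ)
    (hFn : ∀ t, 0 < t → Fn t = (G t) ^ (n - 1) * ((n : ℝ) * t ^ (-α) * H t + G t)) :
    Tendsto (fun x => (1 - Fn x) / ((n : ℝ) * (1 - F x))) atTop (𝓝 1) :=
  kendall_power_tail_regvar_general α θ hα hθ ν hν F G H hF hG hH htail hRV n hn Fn hFn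
end

section
/- Let ν be a probability measure on [0,∞) with cumulative distribution function F whose α-moment m = ∫_{[0,∞)} x^α ν(dx) satisfies 0 < m < ∞. Then for every integer n ≥ 2, the tail F̄_n = 1 − F_n satisfies lim_{x→∞} x^{2α} ( F̄_n(x) − n F̄(x) ) = (1/2) n (n−1) m², where F̄ = 1 − F. -/
/-!
Write `F̄ = 1 - F`, `d(t) = t^{-α} H(t)` and `u = F̄ + d`. Since `ν` lives on `[0, ∞)`, the
Williamson transform is `G = F - d = 1 - u`, so `1 - F_n - n F̄` is the polynomial
`1 - (1 - u)^{n-1} (n d + 1 - u) - n (u - d) = -u² Q(u) + n d u R(u)` with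
`Q(0) = n(n-1)/2` and `R(0) = n - 1`. Both `t^α d = H` and `t^α u` tend to `m`, the latter
because `t^α F̄(t) ≤ ∫_{x > t} x^α dν → 0`; multiplying by `t^{2α}` gives the limit
`-m² n(n-1)/2 + n m² (n-1)`.
-/

open MeasureTheory Filter Real Topology Set

section Algebra

open Finset

variable {R : Type*} [CommRing R]

theorem one_sub_one_sub_pow (u : R) (n : ℕ) :
    1 - (1 - u) ^ n = u * ∑ i ∈ range n, (1 - u) ^ i := by
  simpa using (mul_neg_geom_sum (1 - u) n).symm

theorem one_sub_one_sub_pow_sub_mul (u : R) (n : ℕ) :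
    1 - (1 - u) ^ n - n * u = -u ^ 2 * ∑ i ∈ range n, ∑ j ∈ range i, (1 - u) ^ j := by
  have h : ∀ i, (1 - u) ^ i - 1 = -(u * ∑ j ∈ range i, (1 - u) ^ j) := fun i => by
    rw [← one_sub_one_sub_pow]; ring
  calc 1 - (1 - u) ^ n - n * u = u * ∑ i ∈ range n, ((1 - u) ^ i - 1) := by
        rw [one_sub_one_sub_pow, sum_sub_distrib]; simp; ring
    _ = _ := by simp_rw [h, sum_neg_distrib, ← mul_sum]; ring

theorem kendall_defect_eq {n : ℕ} (hn : 1 ≤ n) (u d : R) :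
    1 - (1 - u) ^ (n - 1) * (n * d + (1 - u)) - n * (u - d)
      = -u ^ 2 * ∑ i ∈ range n, ∑ j ∈ range i, (1 - u) ^ j
        + n * d * u * ∑ i ∈ range (n - 1), (1 - u) ^ i := by
  obtain ⟨k, rfl⟩ := Nat.exists_eq_add_of_le' hn
  rw [Nat.add_sub_cancel, ← one_sub_one_sub_pow_sub_mul, mul_assoc, ← one_sub_one_sub_pow]
  push_cast
  ring

theorem sum_range_natCast_real (n : ℕ) : ∑ i ∈ range n, (i : ℝ) = n * (n - 1) / 2 := by
  induction n with
  | zero => simp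
  | succ k ih => rw [sum_range_succ, ih]; push_cast; ring

theorem tendsto_sq_mul_kendall_defect {ι : Type*} {l : Filter ι} {p u d : ι → ℝ} {a b : ℝ}
    {n : ℕ} (hn : 1 ≤ n) (hp : Tendsto p l atTop) (hpu : Tendsto (fun i => p i * u i) l (𝓝 a))
    (hpd : Tendsto (fun i => p i * d i) l (𝓝 b)) :
    Tendsto (fun i => p i ^ 2 * (1 - (1 - u i) ^ (n - 1) * (n * d i + (1 - u i)) - n * (u i - d i)))
      l (𝓝 (n * (n - 1) * (a * b - a ^ 2 / 2))) := by
  have hu : Tendsto u l (𝓝 0) := by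
    refine (hpu.div_atTop hp).congr' ?_
    filter_upwards [hp.eventually_gt_atTop 0] with i hi
    exact mul_div_cancel_left₀ _ hi.ne'
  have hQ : Tendsto (fun i => ∑ j ∈ range n, ∑ k ∈ range j, (1 - u i) ^ k) l
      (𝓝 (n * (n - 1) / 2)) := by
    have h0 : ∑ j ∈ range n, ∑ k ∈ range j, (1 - (0 : ℝ)) ^ k = n * (n - 1) / 2 := by
      simpa using sum_range_natCast_real n
    rw [← h0]
    exact ((by fun_prop : Continuous fun v : ℝ => ∑ j ∈ range n, ∑ k ∈ range j, (1 - v) ^ k)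
      |>.tendsto 0).comp hu
  have hR : Tendsto (fun i => ∑ j ∈ range (n - 1), (1 - u i) ^ j) l (𝓝 (n - 1)) := by
    have h0 : ∑ j ∈ range (n - 1), (1 - (0 : ℝ)) ^ j = n - 1 := by simp [Nat.cast_sub hn]
    rw [← h0]
    exact ((by fun_prop : Continuous fun v : ℝ => ∑ j ∈ range (n - 1), (1 - v) ^ j)
      |>.tendsto 0).comp hu
  have hlim := ((hpu.pow 2).neg.mul hQ).add
    (((tendsto_const_nhds (x := (n : ℝ))).mul (hpd.mul hpu)).mul hR)
  convert hlim using 2 with i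
  · rw [kendall_defect_eq hn]; ring
  · ring

end Algebra

section Measure

variable {ν : Measure ℝ}

theorem tendsto_setIntegral_Iic_atTop {f : ℝ → ℝ} (hf : Integrable f ν) :
    Tendsto (fun t => ∫ x in Iic t, f x ∂ν) atTop (𝓝 (∫ x, f x ∂ν)) := by
  simpa using tendsto_setIntegral_of_monotone (fun _ => measurableSet_Iic)
    (fun _ _ => Iic_subset_Iic.2) (by rwa [iUnion_Iic, integrableOn_univ])

theorem tendsto_setIntegral_Ioi_atTop {f : ℝ → ℝ} (hf : Integrable f ν) :
    Tendsto (fun t => ∫ x in Ioi t, f x ∂ν) atTop (𝓝 0) := by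
  have hempty : ⋂ t : ℝ, Ioi t = ∅ := iInter_eq_empty_iff.2 fun x => ⟨x, lt_irrefl x⟩
  simpa [hempty] using tendsto_setIntegral_of_antitone (fun _ => measurableSet_Ioi)
    (fun _ _ => Ioi_subset_Ioi) ⟨0, hf.integrableOn⟩

theorem ae_nonneg_of_measure_Iio_zero (hν : ν (Iio 0) = 0) : ∀ᵐ x ∂ν, 0 ≤ x := by
  simpa using measure_eq_zero_iff_ae_notMem.1 hν

theorem setIntegral_Icc_zero_eq_Iic (hν : ν (Iio 0) = 0) (f : ℝ → ℝ) (t : ℝ) :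
    ∫ x in Icc 0 t, f x ∂ν = ∫ x in Iic t, f x ∂ν := by
  refine setIntegral_congr_set (eventuallyEq_set.2 ?_)
  filter_upwards [ae_nonneg_of_measure_Iio_zero hν] with x hx
  simp [hx]

theorem max_one_sub_div_rpow_eq_indicator {α t x : ℝ} (hα : 0 ≤ α) (ht : 0 < t) (hx : 0 ≤ x) :
    max (1 - (x / t) ^ α) 0 = (Iic t).indicator (fun x => 1 - t ^ (-α) * x ^ α) x := by
  have hscale : (x / t) ^ α = t ^ (-α) * x ^ α := by
    rw [div_rpow hx ht.le, rpow_neg ht.le, div_eq_inv_mul]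
  by_cases hxt : x ≤ t
  · rw [indicator_of_mem (mem_Iic.2 hxt), ← hscale, max_eq_left]
    simpa using rpow_le_one (div_nonneg hx ht.le) ((div_le_one ht).2 hxt) hα
  · rw [indicator_of_notMem (mt mem_Iic.1 hxt), max_eq_right]
    simpa using one_le_rpow ((one_le_div ht).2 (not_le.1 hxt).le) hα

variable [IsFiniteMeasure ν]

theorem integral_williamson_eq {α t : ℝ} (hα : 0 ≤ α) (ht : 0 < t)
    (hν : ν (Iio 0) = 0) (hmo : Integrable (fun x => x ^ α) ν) :
    ∫ x, max (1 - (x / t) ^ α) 0 ∂ν = ν.real (Iic t) - t ^ (-α) * ∫ x in Iic t, x ^ α ∂ν := by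
  have hae : (fun x => max (1 - (x / t) ^ α) 0)
      =ᵐ[ν] (Iic t).indicator (fun x => 1 - t ^ (-α) * x ^ α) := by
    filter_upwards [ae_nonneg_of_measure_Iio_zero hν] with x hx
    exact max_one_sub_div_rpow_eq_indicator hα ht hx
  rw [integral_congr_ae hae, integral_indicator measurableSet_Iic,
    integral_sub (integrable_const 1) (hmo.const_mul _).integrableOn,
    setIntegral_const, smul_eq_mul, mul_one, integral_const_mul]

theorem rpow_mul_measureReal_Ioi_le {α t : ℝ} (hα : 0 ≤ α) (ht : 0 < t)
    (hmo : Integrable (fun x => x ^ α) ν) :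
    t ^ α * ν.real (Ioi t) ≤ ∫ x in Ioi t, x ^ α ∂ν := by
  rw [mul_comm, ← smul_eq_mul, ← setIntegral_const]
  exact setIntegral_mono_on (integrableOn_const (measure_ne_top ν _)) hmo.integrableOn
    measurableSet_Ioi fun x hx => rpow_le_rpow ht.le (le_of_lt hx) hα

theorem tendsto_rpow_mul_measureReal_Ioi {α : ℝ} (hα : 0 ≤ α)
    (hmo : Integrable (fun x => x ^ α) ν) :
    Tendsto (fun t => t ^ α * ν.real (Ioi t)) atTop (𝓝 0) := by
  refine tendsto_of_tendsto_of_tendsto_of_le_of_le' tendsto_const_nhds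
    (tendsto_setIntegral_Ioi_atTop hmo) ?_ ?_
  · filter_upwards [eventually_ge_atTop 0] with t ht
    exact mul_nonneg (rpow_nonneg ht α) measureReal_nonneg
  · filter_upwards [eventually_gt_atTop 0] with t ht
    exact rpow_mul_measureReal_Ioi_le hα ht hmo

end Measure

theorem kendall_power_tail_finite_moment_general
    (α : ℝ) (hα : 0 < α)
    (ν : Measure ℝ) [IsProbabilityMeasure ν] (hν : ν (Set.Iio 0) = 0)
    (F G H : ℝ → ℝ)
    (hF : ∀ t, F t = (ν (Set.Iic t)).toReal)
    (hG : ∀ t, 0 < t → G t = ∫ x, max (1 - (x / t) ^ α) 0 ∂ν)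
    (hH : ∀ t, 0 < t → H t = ∫ x in Set.Icc 0 t, x ^ α ∂ν)
    (hmo : Integrable (fun x => x ^ α) ν)
    (n : ℕ) (hn : 2 ≤ n)
    (Fn : ℝ → ℝ)
    (hFn : ∀ t, 0 < t → Fn t = (G t) ^ (n - 1) * ((n : ℝ) * t ^ (-α) * H t + G t)) :
    Tendsto (fun x => x ^ (2 * α) * ((1 - Fn x) - (n : ℝ) * (1 - F x))) atTop
      (𝓝 ((n : ℝ) * ((n : ℝ) - 1) / 2 * (∫ x, x ^ α ∂ν) ^ 2)) := by
  set m := ∫ x, x ^ α ∂ν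
  have hH' : ∀ t, 0 < t → H t = ∫ x in Iic t, x ^ α ∂ν := fun t ht => by
    rw [hH t ht, setIntegral_Icc_zero_eq_Iic hν]
  have hF' : ∀ t, 1 - F t = ν.real (Ioi t) := fun t => by
    rw [hF, ← compl_Iic, probReal_compl_eq_one_sub measurableSet_Iic, measureReal_def]
  have hcancel : ∀ t, 0 < t → t ^ α * (t ^ (-α) * H t) = H t := fun t ht => by
    rw [rpow_neg ht.le, mul_inv_cancel_left₀ (rpow_pos_of_pos ht α).ne']
  have hHm : Tendsto H atTop (𝓝 m) := (tendsto_setIntegral_Iic_atTop hmo).congr'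
    (by filter_upwards [eventually_gt_atTop 0] with t ht using (hH' t ht).symm)
  have hpd : Tendsto (fun t => t ^ α * (t ^ (-α) * H t)) atTop (𝓝 m) := hHm.congr'
    (by filter_upwards [eventually_gt_atTop 0] with t ht using (hcancel t ht).symm)
  have hpu : Tendsto (fun t => t ^ α * ((1 - F t) + t ^ (-α) * H t)) atTop (𝓝 m) := by
    refine (zero_add m ▸ (tendsto_rpow_mul_measureReal_Ioi hα.le hmo).add hHm).congr' ?_
    filter_upwards [eventually_gt_atTop 0] with t ht
    rw [hF', mul_add, hcancel t ht]
  have hval : (n : ℝ) * (n - 1) * (m * m - m ^ 2 / 2) = n * (n - 1) / 2 * m ^ 2 := by ring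
  refine hval ▸ (tendsto_sq_mul_kendall_defect (by omega) (tendsto_rpow_atTop hα) hpu hpd).congr' ?_
  filter_upwards [eventually_gt_atTop 0] with t ht
  have hFt : ν.real (Iic t) = F t := (hF t).symm
  rw [hFn t ht, hG t ht, integral_williamson_eq hα.le ht hν hmo, ← hH' t ht, hFt,
    two_mul, rpow_add ht]
  ring

/-- if the α-moment m = ∫ x^α ν(dx) satisfies 0 < m < ∞, then for every
n ≥ 2 the tail of the n-fold Kendall convolution power satisfies
lim_{x→∞} x^{2α} ( F̄_n(x) − n F̄(x) ) = (1/2) n(n−1) m². -/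
theorem kendall_power_tail_finite_moment
    (α : ℝ) (hα : 0 < α)
    (ν : Measure ℝ) [IsProbabilityMeasure ν] (hν : ν (Set.Iio 0) = 0)
    (F G H : ℝ → ℝ)
    (hF : ∀ t, F t = (ν (Set.Iic t)).toReal)
    (hG : ∀ t, 0 < t → G t = ∫ x, max (1 - (x / t) ^ α) 0 ∂ν)
    (hH : ∀ t, 0 < t → H t = ∫ x in Set.Icc 0 t, x ^ α ∂ν)
    (hmo : Integrable (fun x => x ^ α) ν)
    (hmpos : 0 < ∫ x, x ^ α ∂ν)
    (n : ℕ) (hn : 2 ≤ n)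
    (Fn : ℝ → ℝ)
    (hFn : ∀ t, 0 < t → Fn t = (G t) ^ (n - 1) * ((n : ℝ) * t ^ (-α) * H t + G t)) :
    Tendsto (fun x => x ^ (2 * α) * ((1 - Fn x) - (n : ℝ) * (1 - F x))) atTop
      (𝓝 ((n : ℝ) * ((n : ℝ) - 1) / 2 * (∫ x, x ^ α ∂ν) ^ 2)) :=
  kendall_power_tail_finite_moment_general α hα ν hν F G H hF hG hH hmo n hn Fn hFn
end
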